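/- arXiv:1506.03442 — 9 statements merged into one kernel-verified Lean document; each statement's English description precedes it below -/
import Mathlib

section
/- Let G = (V,E) be a finite simple graph and let S ⊆ V be a locating-dominating set of G. Then S is a locating-dominating set of the complement graph Ḡ if and only if S is a dominating set of Ḡ. -/
open SimpleGraph

/-- `S` is a dominating set of `G`: every vertex outside `S` has a neighbor in `S`. -/
def isDomSet {α : Type*} (G : SimpleGraph α) (S : Set α) : Prop :=
  ∀ v ∉ S, ∃ u ∈ S, G.Adj v u

/-- `S` is a locating-dominating set (LD-set) of `G`. -/
def isLDSet {α : Type*} (G : SimpleGraph α) (S : Set α) : Prop :=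
  isDomSet G S ∧ ∀ u ∉ S, ∀ v ∉ S, u ≠ v →
    G.neighborSet u ∩ S ≠ G.neighborSet v ∩ S

/-- The location-domination number `λ(G)`. -/
noncomputable def ldNum {α : Type*} (G : SimpleGraph α) : ℕ :=
  sInf {n | ∃ S : Set α, isLDSet G S ∧ S.ncard = n}

/-- The global location-domination number `λ_g(G)`. -/
noncomputable def gldNum {α : Type*} (G : SimpleGraph α) : ℕ :=
  sInf {n | ∃ S : Set α, isLDSet G S ∧ isLDSet Gᶜ S ∧ S.ncard = n}

/-- `G` is bipartite with stable sets `U` and `W`. -/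
def bipartiteWith {α : Type*} (G : SimpleGraph α) (U W : Set α) : Prop :=
  U ∪ W = Set.univ ∧ Disjoint U W ∧
    ∀ ⦃u v : α⦄, G.Adj u v → (u ∈ U ∧ v ∈ W) ∨ (u ∈ W ∧ v ∈ U)

/-! Outside `S`, the traces on `S` of the neighbourhoods in `Gᶜ` are the complements in `S` of the
traces in `G`, so two vertices outside `S` are separated by `S` in `Gᶜ` exactly when they are
separated in `G`; only domination can fail in the complement. -/

theorem compl_neighborSet_inter_eq_diff {V : Type*} (G : SimpleGraph V) {S : Set V} {u : V}
    (hu : u ∉ S) : Gᶜ.neighborSet u ∩ S = S \ (G.neighborSet u ∩ S) := by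
  ext w
  simp only [Set.mem_inter_iff, Set.mem_sdiff, mem_neighborSet, compl_adj]
  have : w ∈ S → u ≠ w := fun hw huw => hu (huw ▸ hw)
  tauto

theorem compl_neighborSet_inter_eq_iff {V : Type*} (G : SimpleGraph V) {S : Set V} {u v : V}
    (hu : u ∉ S) (hv : v ∉ S) :
    Gᶜ.neighborSet u ∩ S = Gᶜ.neighborSet v ∩ S ↔ G.neighborSet u ∩ S = G.neighborSet v ∩ S := by
  rw [compl_neighborSet_inter_eq_diff G hu, compl_neighborSet_inter_eq_diff G hv]
  exact ⟨fun h => by rw [← Set.sdiff_sdiff_cancel_left Set.inter_subset_right,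
      h, Set.sdiff_sdiff_cancel_left Set.inter_subset_right], congrArg (S \ ·)⟩

theorem isLDSet_compl_of_isDomSet {V : Type*} {G : SimpleGraph V} {S : Set V}
    (hS : isLDSet G S) (hdom : isDomSet Gᶜ S) : isLDSet Gᶜ S :=
  ⟨hdom, fun u hu v hv huv => by
    rw [Ne, compl_neighborSet_inter_eq_iff G hu hv]
    exact hS.2 u hu v hv huv⟩

theorem stmt0_general {V : Type*} (G : SimpleGraph V) (S : Set V)
    (hS : isLDSet G S) :
    isLDSet Gᶜ S ↔ isDomSet Gᶜ S :=
  ⟨And.left, isLDSet_compl_of_isDomSet hS⟩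

theorem stmt0 {V : Type*} [Fintype V] (G : SimpleGraph V) (S : Set V)
    (hS : isLDSet G S) :
    isLDSet Gᶜ S ↔ isDomSet Gᶜ S :=
  stmt0_general G S hS
end

section
/- Let G = (V,E) be a finite simple graph and let S ⊆ V be a locating-dominating set of G. Then there is at most one vertex u ∈ V∖S with S ⊆ N(u); moreover, if such a vertex u exists, then S ∪ {u} is a locating-dominating set of the complement graph Ḡ. -/
open SimpleGraph

/-! Since `S` separates the vertices outside it by their traces `N(v) ∩ S`, at most one of them
can have the full trace `S`. In `Ḡ` the trace of `v ∉ S` on `S` is the complement `S \ N(v)`, so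
traces that differ in `G` still differ in `Ḡ`; and once the unique vertex `u` with trace `S` is put
into the set, every remaining vertex misses some `w ∈ S` in `G`, i.e. is dominated by `w` in `Ḡ`. -/

namespace isLDSet

variable {α : Type*} {G : SimpleGraph α} {S : Set α}

theorem eq_of_subset_neighborSet (hS : isLDSet G S) {u v : α} (hu : u ∉ S) (hv : v ∉ S)
    (hSu : S ⊆ G.neighborSet u) (hSv : S ⊆ G.neighborSet v) : u = v := by
  by_contra hne
  exact hS.2 u hu v hv hne <| by
    rw [Set.inter_eq_right.mpr hSu, Set.inter_eq_right.mpr hSv]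

theorem exists_not_adj (hS : isLDSet G S) {u v : α} (hu : u ∉ S) (hSu : S ⊆ G.neighborSet u)
    (hv : v ∉ S) (hvu : v ≠ u) : ∃ w ∈ S, ¬G.Adj v w := by
  have hSv : ¬S ⊆ G.neighborSet v := fun hSv => hvu (hS.eq_of_subset_neighborSet hv hu hSv hSu)
  simpa [Set.not_subset] using hSv

end isLDSet

theorem compl_neighborSet_inter_of_notMem {α : Type*} (G : SimpleGraph α) {S : Set α} {v : α}
    (hv : v ∉ S) : Gᶜ.neighborSet v ∩ S = S \ G.neighborSet v := by
  ext w
  simp only [neighborSet_compl, Set.mem_inter_iff, Set.mem_sdiff, Set.mem_compl_iff,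
    Set.mem_singleton_iff]
  exact ⟨fun ⟨⟨hvw, _⟩, hw⟩ => ⟨hw, hvw⟩, fun ⟨hw, hvw⟩ => ⟨⟨hvw, fun h => hv (h ▸ hw)⟩, hw⟩⟩

theorem compl_neighborSet_inter_ne {α : Type*} (G : SimpleGraph α) {S T : Set α} (hST : S ⊆ T)
    {x y : α} (hx : x ∉ S) (hy : y ∉ S) (hxy : G.neighborSet x ∩ S ≠ G.neighborSet y ∩ S) :
    Gᶜ.neighborSet x ∩ T ≠ Gᶜ.neighborSet y ∩ T := by
  intro hT
  have hdiff : S \ G.neighborSet x = S \ G.neighborSet y := by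
    rw [← compl_neighborSet_inter_of_notMem G hx, ← compl_neighborSet_inter_of_notMem G hy,
      ← Set.inter_eq_right.mpr hST, ← Set.inter_assoc, ← Set.inter_assoc, hT]
  apply hxy
  rw [Set.inter_comm, ← Set.sdiff_sdiff_right_self, hdiff, Set.sdiff_sdiff_right_self,
    Set.inter_comm]

theorem isLDSet.compl_union_singleton {α : Type*} {G : SimpleGraph α} {S : Set α}
    (hS : isLDSet G S) {u : α} (hu : u ∉ S) (hSu : S ⊆ G.neighborSet u) :
    isLDSet Gᶜ (S ∪ {u}) := by
  have notMem {v : α} (hv : v ∉ S ∪ {u}) : v ∉ S ∧ v ≠ u := by simp_all [not_or]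
  refine ⟨fun v hv => ?_, fun x hx y hy hxy => ?_⟩
  · obtain ⟨hvS, hvu⟩ := notMem hv
    obtain ⟨w, hwS, hvw⟩ := hS.exists_not_adj hu hSu hvS hvu
    exact ⟨w, Or.inl hwS, (compl_adj G v w).mpr ⟨fun h => hvS (h ▸ hwS), hvw⟩⟩
  · have hxS := (notMem hx).1
    have hyS := (notMem hy).1
    exact compl_neighborSet_inter_ne G Set.subset_union_left hxS hyS (hS.2 x hxS y hyS hxy)

theorem stmt1_general {V : Type*} (G : SimpleGraph V) (S : Set V)
    (hS : isLDSet G S) :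
    (∀ u ∉ S, ∀ v ∉ S, S ⊆ G.neighborSet u → S ⊆ G.neighborSet v → u = v) ∧
    (∀ u ∉ S, S ⊆ G.neighborSet u → isLDSet Gᶜ (S ∪ {u})) :=
  ⟨fun _ hu _ hv => hS.eq_of_subset_neighborSet hu hv,
    fun _ hu => hS.compl_union_singleton hu⟩

theorem stmt1 {V : Type*} [Fintype V] (G : SimpleGraph V) (S : Set V)
    (hS : isLDSet G S) :
    (∀ u ∉ S, ∀ v ∉ S, S ⊆ G.neighborSet u → S ⊆ G.neighborSet v → u = v) ∧
    (∀ u ∉ S, S ⊆ G.neighborSet u → isLDSet Gᶜ (S ∪ {u})) :=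
  stmt1_general G S hS
end

section
/- For every finite simple graph G, max{λ(G), λ(Ḡ)} ≤ λ_g(G) ≤ min{λ(G)+1, λ(Ḡ)+1}. -/
/-!
An LD-set `S` of `G` locates the vertices outside `S` in `Gᶜ` as well, since there their traces
on `S` are the complements in `S` of the traces in `G`. What may fail is domination in `Gᶜ`: a
vertex outside `S` is undominated in `Gᶜ` exactly when it is adjacent in `G` to all of `S`, and
by location there is at most one such vertex. Adding it to `S` gives a global LD-set of size at
most `|S| + 1`. The lower bound holds because a global LD-set is an LD-set of both `G` and `Gᶜ`.
-/

open SimpleGraph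

def isLocSet {α : Type*} (G : SimpleGraph α) (S : Set α) : Prop :=
  ∀ u ∉ S, ∀ v ∉ S, u ≠ v → G.neighborSet u ∩ S ≠ G.neighborSet v ∩ S

section LocatingDominating

variable {α : Type*} {G : SimpleGraph α} {S T : Set α}

lemma isLDSet_iff : isLDSet G S ↔ isDomSet G S ∧ isLocSet G S := Iff.rfl

lemma isLDSet_univ (G : SimpleGraph α) : isLDSet G Set.univ :=
  ⟨fun v hv => (hv (Set.mem_univ v)).elim, fun u hu => (hu (Set.mem_univ u)).elim⟩

lemma isDomSet.mono (hS : isDomSet G S) (hST : S ⊆ T) : isDomSet G T := fun v hv =>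
  let ⟨u, huS, huv⟩ := hS v (fun h => hv (hST h))
  ⟨u, hST huS, huv⟩

lemma isLocSet.mono (hS : isLocSet G S) (hST : S ⊆ T) : isLocSet G T := by
  intro u hu v hv huv htrace
  refine hS u (fun h => hu (hST h)) v (fun h => hv (hST h)) huv ?_
  rw [← Set.inter_eq_right.2 hST, ← Set.inter_assoc, htrace, Set.inter_assoc]

lemma compl_neighborSet_inter {u : α} (hu : u ∉ S) :
    Gᶜ.neighborSet u ∩ S = S \ (G.neighborSet u ∩ S) := by
  ext x
  simp only [Set.mem_inter_iff, mem_neighborSet, compl_adj, Set.mem_sdiff]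
  exact ⟨fun ⟨⟨_, hna⟩, hx⟩ => ⟨hx, fun h => hna h.1⟩,
    fun ⟨hx, h⟩ => ⟨⟨fun huv => hu (huv ▸ hx), fun ha => h ⟨ha, hx⟩⟩, hx⟩⟩

lemma isLocSet.compl (hS : isLocSet G S) : isLocSet Gᶜ S := by
  intro u hu v hv huv htrace
  rw [compl_neighborSet_inter hu, compl_neighborSet_inter hv] at htrace
  exact hS u hu v hv huv <| by
    rw [← Set.sdiff_sdiff_cancel_left Set.inter_subset_right, htrace,
      Set.sdiff_sdiff_cancel_left Set.inter_subset_right]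

lemma exists_compl_adj_of_not_subset_neighborSet {v : α} (hv : v ∉ S)
    (hvS : ¬ S ⊆ G.neighborSet v) : ∃ u ∈ S, Gᶜ.Adj v u := by
  obtain ⟨u, huS, hnadj⟩ := Set.not_subset.1 hvS
  exact ⟨u, huS, fun hvu => hv (hvu ▸ huS), hnadj⟩

lemma isLocSet.subsingleton_fullyAdjacent (hS : isLocSet G S) :
    {w | w ∉ S ∧ S ⊆ G.neighborSet w}.Subsingleton := by
  rintro w₁ ⟨hw₁, hS₁⟩ w₂ ⟨hw₂, hS₂⟩
  by_contra hne
  exact hS w₁ hw₁ w₂ hw₂ hne <| by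
    rw [Set.inter_eq_right.2 hS₁, Set.inter_eq_right.2 hS₂]

lemma isLDSet.exists_global (hS : isLDSet G S) :
    ∃ T, isLDSet G T ∧ isLDSet Gᶜ T ∧ T.ncard ≤ S.ncard + 1 := by
  obtain ⟨hdom, hloc⟩ := isLDSet_iff.1 hS
  set W := {w | w ∉ S ∧ S ⊆ G.neighborSet w}
  have hW := hloc.subsingleton_fullyAdjacent
  have hST : S ⊆ S ∪ W := Set.subset_union_left
  have hdomC : isDomSet Gᶜ (S ∪ W) := by
    intro v hv
    obtain ⟨u, huS, hadj⟩ := exists_compl_adj_of_not_subset_neighborSet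
      (fun h => hv (Or.inl h)) (fun hsub => hv (Or.inr ⟨fun h => hv (Or.inl h), hsub⟩))
    exact ⟨u, hST huS, hadj⟩
  refine ⟨S ∪ W, ⟨hdom.mono hST, hloc.mono hST⟩, ⟨hdomC, hloc.compl.mono hST⟩, ?_⟩
  calc (S ∪ W).ncard ≤ S.ncard + W.ncard := Set.ncard_union_le S W
    _ ≤ S.ncard + 1 := by gcongr; exact (Set.ncard_le_one hW.finite).2 hW

end LocatingDominating

section Numbers

variable {V : Type*} (G : SimpleGraph V)

lemma ldNum_le_gldNum : ldNum G ≤ gldNum G :=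
  csInf_le_csInf' ⟨_, Set.univ, isLDSet_univ G, isLDSet_univ Gᶜ, rfl⟩
    fun _ ⟨S, hS, _, hcard⟩ => ⟨S, hS, hcard⟩

lemma gldNum_compl : gldNum Gᶜ = gldNum G := by
  simp only [gldNum, compl_compl, and_left_comm]

lemma gldNum_le_ldNum_add_one : gldNum G ≤ ldNum G + 1 := by
  obtain ⟨S, hS, hcard⟩ := Nat.sInf_mem
    (⟨_, Set.univ, isLDSet_univ G, rfl⟩ : {n | ∃ S : Set V, isLDSet G S ∧ S.ncard = n}.Nonempty)
  obtain ⟨T, hTG, hTGc, hT⟩ := hS.exists_global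
  calc gldNum G ≤ T.ncard := Nat.sInf_le ⟨T, hTG, hTGc, rfl⟩
    _ ≤ S.ncard + 1 := hT
    _ = ldNum G + 1 := congrArg (· + 1) hcard

end Numbers

theorem stmt5_general {V : Type*} (G : SimpleGraph V) :
    max (ldNum G) (ldNum Gᶜ) ≤ gldNum G ∧
    gldNum G ≤ min (ldNum G + 1) (ldNum Gᶜ + 1) := by
  refine ⟨max_le (ldNum_le_gldNum G) ?_, le_min (gldNum_le_ldNum_add_one G) ?_⟩
  · exact gldNum_compl G ▸ ldNum_le_gldNum Gᶜ
  · exact gldNum_compl G ▸ gldNum_le_ldNum_add_one Gᶜ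

theorem stmt5 {V : Type*} [Fintype V] (G : SimpleGraph V) :
    max (ldNum G) (ldNum Gᶜ) ≤ gldNum G ∧
    gldNum G ≤ min (ldNum G + 1) (ldNum Gᶜ + 1) :=
  stmt5_general G
end

section
/- Let G be a connected bipartite graph of order n = r + s ≥ 4 whose vertex set is partitioned into stable sets U and W with 1 ≤ |U| = r ≤ s = |W|. If r < s and W is an LD-code of G, then λ(Ḡ) ≤ λ(G). -/
open SimpleGraph

open Submodule

lemma aux_card {V : Type*} [Fintype V] [DecidableEq V] (A B : Set V) (f : V → V → ZMod 2)
    (h : ∀ w ∈ A, ∃ u ∈ B, ∃ v ∈ B, f u - f v = Pi.single w 1) :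
    A.ncard ≤ B.ncard := by
  classical
  set M := Submodule.span (ZMod 2) (f '' B) with hM
  have hmem : ∀ w ∈ A, Pi.single w (1 : ZMod 2) ∈ M := by
    intro w hw
    obtain ⟨u, hu, v, hv, huv⟩ := h w hw
    rw [← huv]
    exact sub_mem (Submodule.subset_span ⟨u, hu, rfl⟩) (Submodule.subset_span ⟨v, hv, rfl⟩)
  haveI : FiniteDimensional (ZMod 2) M :=
    FiniteDimensional.span_of_finite _ ((Set.toFinite B).image f)
  haveI : Fintype A := (Set.toFinite A).fintype
  have hli : LinearIndependent (ZMod 2)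
      (fun w : A => (⟨Pi.single (w : V) 1, hmem w w.2⟩ : M)) := by
    apply LinearIndependent.of_comp M.subtype
    have h2 := (Pi.basisFun (ZMod 2) V).linearIndependent.comp
      (Subtype.val : A → V) Subtype.val_injective
    convert h2 using 1
    funext w
    simp [Pi.basisFun_apply, M]
  have h1 : A.ncard ≤ Module.finrank (ZMod 2) M := by
    have := hli.fintype_card_le_finrank
    rwa [Set.ncard_eq_toFinset_card', Set.toFinset_card]
  have h2 : Module.finrank (ZMod 2) M ≤ B.ncard := by
    haveI : Fintype (f '' B) := ((Set.toFinite B).image f).fintype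
    refine le_trans (finrank_span_le_card (f '' B)) ?_
    rw [← Set.ncard_eq_toFinset_card']
    exact Set.ncard_image_le (Set.toFinite B)
  omega

theorem stmt10 {V : Type*} [Fintype V] (G : SimpleGraph V) (U W : Set V) (r s : ℕ)
    (hconn : G.Connected) (hbip : bipartiteWith G U W)
    (hU : U.ncard = r) (hW : W.ncard = s)
    (hr1 : 1 ≤ r) (hrs : r < s) (hn : 4 ≤ r + s)
    (hLD : isLDSet G W) (hcode : W.ncard = ldNum G) :
    ldNum Gᶜ ≤ ldNum G := by
  classical
  obtain ⟨hunion, hdisj, hcross⟩ := hbip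
  have hUU : ∀ u v : V, u ∉ W → v ∉ W → ¬ G.Adj u v := by
    intro u v hu hv hadj
    rcases hcross hadj with ⟨h1, h2⟩ | ⟨h1, h2⟩
    · exact hv h2
    · exact hu h1
  have hWW : ∀ u v : V, u ∈ W → v ∈ W → ¬ G.Adj u v := by
    intro u v hu hv hadj
    rcases hcross hadj with ⟨h1, h2⟩ | ⟨h1, h2⟩
    · exact Set.disjoint_left.mp hdisj h1 hu
    · exact Set.disjoint_left.mp hdisj h2 hv
  have hWcU : Wᶜ ⊆ U := by
    intro v hv
    have : v ∈ U ∪ W := hunion ▸ Set.mem_univ v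
    rcases this with h | h
    · exact h
    · exact absurd h hv
  -- reduce to exhibiting an LD-set of Gᶜ of cardinality s
  suffices hS : ∃ S : Set V, isLDSet Gᶜ S ∧ S.ncard = s by
    obtain ⟨S, h1, h2⟩ := hS
    have hle : ldNum Gᶜ ≤ s := Nat.sInf_le ⟨S, h1, h2⟩
    have : ldNum G = s := by rw [← hcode, hW]
    omega
  by_cases hA : ∀ u, u ∉ W → ∃ w ∈ W, ¬ G.Adj u w
  · -- Case A : W itself is an LD-set of Gᶜ
    refine ⟨W, ⟨?_, ?_⟩, hW⟩
    · intro v hv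
      obtain ⟨w, hwW, hnadj⟩ := hA v hv
      refine ⟨w, hwW, ?_⟩
      rw [compl_adj]
      exact ⟨fun h => hv (h ▸ hwW), hnadj⟩
    · intro u hu v hv huv heq
      apply hLD.2 u hu v hv huv
      ext x
      simp only [Set.mem_inter_iff, mem_neighborSet]
      have hx : ∀ y, y ∉ W → ∀ hxW : x ∈ W, (G.Adj y x ↔ ¬ Gᶜ.Adj y x) := by
        intro y hy hxW
        rw [compl_adj]
        push_neg
        constructor
        · intro h hne; exact h
        · intro h; exact h (fun hEq => hy (hEq ▸ hxW))
      constructor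
      · rintro ⟨hadj, hxW⟩
        refine ⟨?_, hxW⟩
        rw [hx v hv hxW]
        intro hc
        have : x ∈ Gᶜ.neighborSet u ∩ W := heq ▸ ⟨hc, hxW⟩
        exact ((hx u hu hxW).mp hadj) this.1
      · rintro ⟨hadj, hxW⟩
        refine ⟨?_, hxW⟩
        rw [hx u hu hxW]
        intro hc
        have : x ∈ Gᶜ.neighborSet v ∩ W := heq ▸ ⟨hc, hxW⟩
        exact ((hx v hv hxW).mp hadj) this.1
  · -- Case B : some u0 adjacent to all of W
    push_neg at hA
    obtain ⟨u0, hu0, hu0adj⟩ := hA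
    set f : V → V → ZMod 2 := fun u w => if G.Adj u w ∧ w ∈ W then 1 else 0 with hf
    set bad : Set V := {w | w ∈ W ∧ ∃ u v : V, u ∉ W ∧ v ∉ W ∧ u ≠ v ∧
        (G.neighborSet u ∩ W) \ {w} = (G.neighborSet v ∩ W) \ {w}} with hbad
    have hsub : ∀ a b : ZMod 2, a ≠ b → a - b = 1 := by decide
    have hbadcard : bad.ncard ≤ Wᶜ.ncard := by
      apply aux_card bad Wᶜ f
      rintro w ⟨hwW, u, v, hu, hv, huv, htr⟩
      refine ⟨u, hu, v, hv, ?_⟩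
      funext x
      simp only [Pi.sub_apply]
      by_cases hxw : x = w
      · subst hxw
        rw [Pi.single_eq_same]
        apply hsub
        simp only [hf]
        intro hEq
        apply hLD.2 u hu v hv huv
        ext y
        by_cases hyw : y = x
        · subst hyw
          simp only [Set.mem_inter_iff, mem_neighborSet]
          split_ifs at hEq with p q
          · tauto
          · exact absurd hEq one_ne_zero
          · exact absurd hEq.symm one_ne_zero
          · tauto
        · have h1 := Set.ext_iff.mp htr y
          simp only [Set.mem_diff, Set.mem_singleton_iff, hyw] at h1
          simp only [Set.mem_inter_iff, mem_neighborSet] at h1 ⊢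
          tauto
      · rw [Pi.single_eq_of_ne hxw, sub_eq_zero]
        have h1 := Set.ext_iff.mp htr x
        simp only [Set.mem_diff, Set.mem_singleton_iff, hxw] at h1
        simp only [hf, Set.mem_inter_iff, mem_neighborSet] at h1 ⊢
        by_cases h2 : G.Adj u x ∧ x ∈ W <;> by_cases h3 : G.Adj v x ∧ x ∈ W <;>
          simp [h2, h3] <;> tauto
    have hWcr : Wᶜ.ncard ≤ r := hU ▸ Set.ncard_le_ncard hWcU (Set.toFinite U)
    -- find a good w0
    have hgood : ∃ w0 ∈ W, w0 ∉ bad := by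
      by_contra hc
      push_neg at hc
      have : W ⊆ bad := hc
      have := Set.ncard_le_ncard this (Set.toFinite bad)
      omega
    obtain ⟨w0, hw0W, hw0good⟩ := hgood
    have hgood' : ∀ u v : V, u ∉ W → v ∉ W → u ≠ v →
        (G.neighborSet u ∩ W) \ {w0} ≠ (G.neighborSet v ∩ W) \ {w0} := by
      intro u v hu hv huv hEq
      exact hw0good ⟨hw0W, u, v, hu, hv, huv, hEq⟩
    -- the LD-set of the complement
    refine ⟨insert u0 (W \ {w0}), ⟨?_, ?_⟩, ?_⟩
    · -- dominating
      intro v hv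
      by_cases hvW : v ∈ W
      · -- v = w0 ; find another vertex of W
        have hv0 : v = w0 := by
          by_contra hne
          exact hv (Set.mem_insert_of_mem _ ⟨hvW, hne⟩)
        have hW2 : (W \ {w0}).Nonempty := by
          apply Set.nonempty_of_ncard_ne_zero
          have := Set.ncard_diff_singleton_of_mem hw0W
          omega
        obtain ⟨w1, hw1⟩ := hW2
        refine ⟨w1, Set.mem_insert_of_mem _ hw1, ?_⟩
        rw [compl_adj]
        refine ⟨?_, hWW v w1 hvW hw1.1⟩
        intro hEq
        exact hw1.2 (by rw [← hEq, hv0]; exact Set.mem_singleton w0)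
      · have hne : v ≠ u0 := fun h => hv (by rw [h]; exact Set.mem_insert _ _)
        exact ⟨u0, Set.mem_insert u0 _, by rw [compl_adj]; exact ⟨hne, hUU v u0 hvW hu0⟩⟩
    · -- locating
      intro u hu v hv huv heq
      have houtside : ∀ x, x ∉ insert u0 (W \ {w0}) → (x ∈ W → x = w0) ∧ x ≠ u0 := by
        intro x hx
        constructor
        · intro hxW
          by_contra hne
          exact hx (Set.mem_insert_of_mem _ ⟨hxW, hne⟩)
        · intro h; exact hx (by rw [h]; exact Set.mem_insert _ _)
      have hu' := houtside u hu
      have hv' := houtside v hv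
      -- key : if x ∉ W and x ≠ u0 then u0 ∈ trace of x
      have hkey : ∀ x, x ∉ W → x ≠ u0 →
          u0 ∈ Gᶜ.neighborSet x ∩ insert u0 (W \ {w0}) := by
        intro x hxW hxu0
        exact ⟨by rw [mem_neighborSet, compl_adj]; exact ⟨hxu0, hUU x u0 hxW hu0⟩,
          Set.mem_insert u0 _⟩
      have hkey2 : u0 ∉ Gᶜ.neighborSet w0 ∩ insert u0 (W \ {w0}) := by
        rintro ⟨h1, -⟩
        rw [mem_neighborSet, compl_adj] at h1
        exact h1.2 (G.adj_symm (hu0adj w0 hw0W))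
      by_cases huW : u ∈ W <;> by_cases hvW : v ∈ W
      · exact huv ((hu'.1 huW).trans (hv'.1 hvW).symm)
      · have h1 := hkey v hvW hv'.2
        rw [← heq, hu'.1 huW] at h1
        exact hkey2 h1
      · have h1 := hkey u huW hu'.2
        rw [heq, hv'.1 hvW] at h1
        exact hkey2 h1
      · -- both outside W
        apply hgood' u v huW hvW huv
        ext x
        simp only [Set.mem_diff, Set.mem_inter_iff, mem_neighborSet, Set.mem_singleton_iff]
        have hiff : ∀ y, y ∉ W → x ∈ W → x ≠ w0 →
            (G.Adj y x ↔ x ∉ Gᶜ.neighborSet y ∩ insert u0 (W \ {w0})) := by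
          intro y hyW hxW hxw0
          rw [Set.mem_inter_iff, mem_neighborSet, compl_adj]
          constructor
          · intro h hc; exact hc.1.2 h
          · intro h
            by_contra hnadj
            exact h ⟨⟨fun hEq => hyW (hEq ▸ hxW), hnadj⟩,
              Set.mem_insert_of_mem _ ⟨hxW, hxw0⟩⟩
        constructor
        · rintro ⟨⟨hadj, hxW⟩, hxw0⟩
          refine ⟨⟨?_, hxW⟩, hxw0⟩
          rw [hiff v hvW hxW hxw0, ← heq, ← hiff u huW hxW hxw0]
          exact hadj
        · rintro ⟨⟨hadj, hxW⟩, hxw0⟩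
          refine ⟨⟨?_, hxW⟩, hxw0⟩
          rw [hiff u huW hxW hxw0, heq, ← hiff v hvW hxW hxw0]
          exact hadj
    · -- cardinality
      have h1 : u0 ∉ W \ {w0} := fun h => hu0 h.1
      rw [Set.ncard_insert_of_notMem h1 (Set.toFinite _),
        Set.ncard_diff_singleton_of_mem hw0W, hW]
      omega
end

section
/- Let G be a connected bipartite graph of order n = r + s ≥ 4 whose vertex set is partitioned into stable sets U and W with 1 ≤ |U| = r ≤ s = |W|. If 2^r ≤ s, then λ(Ḡ) ≤ λ(G). -/
open SimpleGraph

lemma sq_lt_two_pow (r : ℕ) : r * r < 2 ^ (r + 1) := by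
  induction r with
  | zero => norm_num
  | succ n ih =>
    have h1 : n + 1 ≤ 2 ^ n := (Nat.lt_two_pow_self (n := n))
    have h2 : (2:ℕ) ^ (n+2) = 2 ^ (n+1) + 2^(n+1) := by ring
    have h3 : 2*(n+1) ≤ 2^(n+1) := by rw [pow_succ]; omega
    nlinarith

lemma aux_prod {α : Type*} [Fintype α] (s t : Set α) :
    (s ×ˢ t).ncard = s.ncard * t.ncard := by
  classical
  rw [Set.ncard_eq_toFinset_card', Set.ncard_eq_toFinset_card', Set.ncard_eq_toFinset_card',
    Set.toFinset_prod, Finset.card_product]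

lemma compl_trace {α : Type*} (G : SimpleGraph α) {S : Set α} {u : α} (hu : u ∉ S) :
    Gᶜ.neighborSet u ∩ S = S \ G.neighborSet u := by
  ext x
  simp only [Set.mem_inter_iff, SimpleGraph.mem_neighborSet, SimpleGraph.compl_adj, Set.mem_diff]
  constructor
  · rintro ⟨⟨-, h⟩, hx⟩; exact ⟨hx, h⟩
  · rintro ⟨hx, h⟩; exact ⟨⟨fun e => hu (e ▸ hx), h⟩, hx⟩

set_option maxHeartbeats 1000000 in
theorem stmt11 {V : Type*} [Fintype V] (G : SimpleGraph V) (U W : Set V) (r s : ℕ)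
    (hconn : G.Connected) (hbip : bipartiteWith G U W)
    (hU : U.ncard = r) (hW : W.ncard = s)
    (hr1 : 1 ≤ r) (hrs : r ≤ s) (hn : 4 ≤ r + s)
    (h2r : 2 ^ r ≤ s) :
    ldNum Gᶜ ≤ ldNum G := by
  classical
  obtain ⟨hcov, hdisj, hadj⟩ := hbip
  have hdisj' : ∀ x, x ∈ U → x ∉ W := fun x hx hw => (Set.disjoint_left.mp hdisj hx) hw
  have hstU : ∀ {a b : V}, a ∈ U → b ∈ U → ¬ G.Adj a b := by
    intro a b ha hb hab
    rcases hadj hab with ⟨h1, h2⟩ | ⟨h1, h2⟩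
    · exact hdisj' b hb h2
    · exact hdisj' a ha h1
  have hstW : ∀ {a b : V}, a ∈ W → b ∈ W → ¬ G.Adj a b := by
    intro a b ha hb hab
    rcases hadj hab with ⟨h1, h2⟩ | ⟨h1, h2⟩
    · exact hdisj' a h1 ha
    · exact hdisj' b h2 hb
  -- a minimum LD set of G
  have hne : ({n | ∃ S : Set V, isLDSet G S ∧ S.ncard = n}).Nonempty :=
    ⟨(Set.univ : Set V).ncard, Set.univ,
      ⟨fun v hv => absurd (Set.mem_univ v) hv, fun u hu => absurd (Set.mem_univ u) hu⟩, rfl⟩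
  obtain ⟨S, hS, hScard⟩ := Nat.sInf_mem hne
  suffices key : ∃ S' : Set V, isLDSet Gᶜ S' ∧ S'.ncard ≤ S.ncard by
    obtain ⟨S', hS', hle⟩ := key
    calc ldNum Gᶜ ≤ S'.ncard := Nat.sInf_le ⟨S', hS', rfl⟩
      _ ≤ S.ncard := hle
      _ = ldNum G := hScard
  -- the locating property always transfers to the complement
  have hloc : ∀ u ∉ S, ∀ w ∉ S, u ≠ w →
      Gᶜ.neighborSet u ∩ S ≠ Gᶜ.neighborSet w ∩ S := by
    intro u hu w hw huw heq
    apply hS.2 u hu w hw huw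
    rw [compl_trace G hu, compl_trace G hw] at heq
    ext x
    simp only [Set.mem_inter_iff, Set.mem_diff] at *
    constructor
    · intro ⟨hx1, hx2⟩
      by_contra h
      have : x ∈ S \ G.neighborSet w := ⟨hx2, fun h' => h ⟨h', hx2⟩⟩
      rw [← heq] at this
      exact this.2 hx1
    · intro ⟨hx1, hx2⟩
      by_contra h
      have : x ∈ S \ G.neighborSet u := ⟨hx2, fun h' => h ⟨h', hx2⟩⟩
      rw [heq] at this
      exact this.2 hx1
  by_cases hdom : isDomSet Gᶜ S
  · exact ⟨S, ⟨hdom, hloc⟩, le_refl _⟩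
  -- domination fails: there is v outside S adjacent (in G) to all of S
  unfold isDomSet at hdom
  push_neg at hdom
  obtain ⟨v, hvS, hv⟩ := hdom
  have hSN : ∀ x ∈ S, G.Adj v x := by
    intro x hx
    by_contra h
    exact hv x hx ((G.compl_adj v x).mpr ⟨fun e => hvS (e ▸ hx), h⟩)
  have hSne : S.Nonempty := by
    rcases Set.eq_empty_or_nonempty S with h | h
    · exfalso
      have hUne : U.Nonempty := Set.nonempty_of_ncard_ne_zero (by omega)
      obtain ⟨u0, hu0⟩ := hUne
      obtain ⟨x, hx, -⟩ := hS.1 u0 (by simp [h])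
      simp [h] at hx
    · exact h
  obtain ⟨x0, hx0⟩ := hSne
  rcases hadj (hSN x0 hx0) with ⟨hvU, hx0W⟩ | ⟨hvW, hx0U⟩
  · -- v ∈ U, so S ⊆ W, and in fact S = W
    have hSW : S ⊆ W := by
      intro x hx
      rcases hadj (hSN x hx) with ⟨h1, h2⟩ | ⟨h1, h2⟩
      · exact h2
      · exact absurd hvU (fun hu => hdisj' v hu h1)
    have hWS : W ⊆ S := by
      intro w hw
      by_contra hws
      obtain ⟨x, hxS, hadjwx⟩ := hS.1 w hws
      exact hstW hw (hSW hxS) hadjwx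
    have hSeqW : S = W := le_antisymm hSW hWS
    have hvnW : v ∉ W := hdisj' v hvU
    have hs2 : 2 ≤ s := by
      calc 2 = 2 ^ 1 := rfl
        _ ≤ 2 ^ r := Nat.pow_le_pow_right (by norm_num) hr1
        _ ≤ s := h2r
    have hUnotS : ∀ u ∈ U, u ∉ S := fun u hu => hSeqW ▸ hdisj' u hu
    -- the "bad" set of vertices w that would break locating if removed
    set B : Set V := {w | ∃ p : V × V, (p.1 ∈ U ∧ p.1 ≠ v) ∧ (p.2 ∈ U ∧ p.2 ≠ v) ∧ p.1 ≠ p.2 ∧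
      G.neighborSet p.1 ∩ (W \ {w}) = G.neighborSet p.2 ∩ (W \ {w})} with hBdef
    have hBcard : B.ncard ≤ (r - 1) * (r - 1) := by
      have hch : ∀ w ∈ B, ∃ p : V × V, (p.1 ∈ U ∧ p.1 ≠ v) ∧ (p.2 ∈ U ∧ p.2 ≠ v) ∧ p.1 ≠ p.2 ∧
          G.neighborSet p.1 ∩ (W \ {w}) = G.neighborSet p.2 ∩ (W \ {w}) := fun w hw => hw
      choose! f h1 h2 h3 h4 using hch
      have hmap : ∀ w ∈ B, f w ∈ (U \ {v}) ×ˢ (U \ {v}) := by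
        intro w hw
        exact ⟨⟨(h1 w hw).1, (h1 w hw).2⟩, ⟨(h2 w hw).1, (h2 w hw).2⟩⟩
      have hinj : Set.InjOn f B := by
        intro w hw w' hw' heq
        by_contra hne'
        apply hS.2 (f w).1 (hUnotS _ (h1 w hw).1) (f w).2 (hUnotS _ (h2 w hw).1) (h3 w hw)
        rw [hSeqW]
        have e1 := h4 w hw
        have e2 := h4 w' hw'
        rw [← heq] at e2
        ext x
        simp only [Set.mem_inter_iff, Set.mem_diff, Set.mem_singleton_iff] at *
        constructor
        · intro ⟨hxa, hxW⟩
          by_cases hxw : x = w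
          · have : x ∈ G.neighborSet (f w).1 ∩ (W \ {w'}) :=
              ⟨hxa, hxW, fun e => hne' (hxw ▸ e ▸ rfl)⟩
            rw [e2] at this
            exact ⟨this.1, hxW⟩
          · have : x ∈ G.neighborSet (f w).1 ∩ (W \ {w}) := ⟨hxa, hxW, hxw⟩
            rw [e1] at this
            exact ⟨this.1, hxW⟩
        · intro ⟨hxa, hxW⟩
          by_cases hxw : x = w
          · have : x ∈ G.neighborSet (f w).2 ∩ (W \ {w'}) :=
              ⟨hxa, hxW, fun e => hne' (hxw ▸ e ▸ rfl)⟩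
            rw [← e2] at this
            exact ⟨this.1, hxW⟩
          · have : x ∈ G.neighborSet (f w).2 ∩ (W \ {w}) := ⟨hxa, hxW, hxw⟩
            rw [← e1] at this
            exact ⟨this.1, hxW⟩
      have := Set.ncard_le_ncard_of_injOn f hmap hinj (Set.toFinite _)
      rwa [aux_prod, Set.ncard_diff_singleton_of_mem hvU, hU] at this
    have hBW : ¬ (W ⊆ B) := by
      intro hsub
      have h5 := Set.ncard_le_ncard hsub (Set.toFinite B)
      have h6 : (r - 1) * (r - 1) < 2 ^ ((r - 1) + 1) := sq_lt_two_pow (r - 1)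
      have h7 : (r - 1) + 1 = r := by omega
      rw [h7] at h6
      omega
    obtain ⟨w0, hw0W, hw0B⟩ := Set.not_subset.mp hBW
    -- the new LD set for the complement
    refine ⟨insert v (W \ {w0}), ⟨?_, ?_⟩, ?_⟩
    · -- domination in Gᶜ
      intro x hx
      have hmem : x = w0 ∨ (x ∈ U ∧ x ≠ v) := by
        by_cases hxw : x = w0
        · exact Or.inl hxw
        · refine Or.inr ⟨?_, fun e => hx (e ▸ Set.mem_insert _ _)⟩
          have hxuniv : x ∈ U ∪ W := hcov ▸ Set.mem_univ x
          rcases hxuniv with h | h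
          · exact h
          · exact absurd (Set.mem_insert_of_mem v (show x ∈ W \ {w0} from ⟨h, hxw⟩)) hx
      rcases hmem with hxw0 | ⟨hxU, hxv⟩
      · rw [hxw0]
        obtain ⟨a, b, ha, hb, hab⟩ :=
          (Set.one_lt_ncard_iff (Set.toFinite W)).mp (by omega : 1 < W.ncard)
        rcases eq_or_ne a w0 with h | h
        · have hbw : b ≠ w0 := fun e => hab (h.trans e.symm)
          exact ⟨b, Set.mem_insert_of_mem _ ⟨hb, hbw⟩,
            (G.compl_adj w0 b).mpr ⟨fun e => hbw e.symm, hstW hw0W hb⟩⟩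
        · exact ⟨a, Set.mem_insert_of_mem _ ⟨ha, h⟩,
            (G.compl_adj w0 a).mpr ⟨fun e => h e.symm, hstW hw0W ha⟩⟩
      · exact ⟨v, Set.mem_insert _ _, (G.compl_adj x v).mpr ⟨hxv, hstU hxU hvU⟩⟩
    · -- locating in Gᶜ
      have hmemc : ∀ x, x ∉ insert v (W \ {w0}) → x = w0 ∨ (x ∈ U ∧ x ≠ v) := by
        intro x hx
        by_cases hxw : x = w0
        · exact Or.inl hxw
        · refine Or.inr ⟨?_, fun e => hx (e ▸ Set.mem_insert _ _)⟩
          have hxuniv : x ∈ U ∪ W := hcov ▸ Set.mem_univ x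
          rcases hxuniv with h | h
          · exact h
          · exact absurd (Set.mem_insert_of_mem v (show x ∈ W \ {w0} from ⟨h, hxw⟩)) hx
      have htrU : ∀ u, u ∈ U → u ≠ v →
          Gᶜ.neighborSet u ∩ (insert v (W \ {w0})) =
            insert v ((W \ {w0}) \ G.neighborSet u) := by
        intro u hu huv
        ext x
        simp only [Set.mem_inter_iff, SimpleGraph.mem_neighborSet, SimpleGraph.compl_adj,
          Set.mem_insert_iff, Set.mem_diff, Set.mem_singleton_iff]
        constructor
        · rintro ⟨⟨hne', hnadj⟩, h | h⟩
          · exact Or.inl h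
          · exact Or.inr ⟨⟨h.1, h.2⟩, hnadj⟩
        · rintro (rfl | ⟨⟨hxW, hxw0⟩, hnadj⟩)
          · exact ⟨⟨huv, hstU hu hvU⟩, Or.inl rfl⟩
          · exact ⟨⟨fun e => hdisj' u hu (by rw [e]; exact hxW), hnadj⟩, Or.inr ⟨hxW, hxw0⟩⟩
      have htrw0 : Gᶜ.neighborSet w0 ∩ (insert v (W \ {w0})) = W \ {w0} := by
        ext x
        simp only [Set.mem_inter_iff, SimpleGraph.mem_neighborSet, SimpleGraph.compl_adj,
          Set.mem_insert_iff, Set.mem_diff, Set.mem_singleton_iff]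
        constructor
        · rintro ⟨⟨hne', hnadj⟩, h | h⟩
          · exfalso
            exact hnadj (by rw [h]; exact (hSN w0 (hWS hw0W)).symm)
          · exact h
        · rintro ⟨hxW, hxw0⟩
          exact ⟨⟨fun e => hxw0 e.symm, hstW hw0W hxW⟩, Or.inr ⟨hxW, hxw0⟩⟩
      intro a ha b hb hab heq
      rcases hmemc a ha with haw | ⟨haU, hav⟩ <;> rcases hmemc b hb with hbw | ⟨hbU, hbv⟩
      · exact hab (haw.trans hbw.symm)
      · rw [haw, htrw0, htrU b hbU hbv] at heq
        have : v ∈ W \ {w0} := by rw [heq]; exact Set.mem_insert _ _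
        exact hvnW this.1
      · rw [hbw, htrw0, htrU a haU hav] at heq
        have : v ∈ W \ {w0} := by rw [← heq]; exact Set.mem_insert _ _
        exact hvnW this.1
      · rw [htrU a haU hav, htrU b hbU hbv] at heq
        have hAB : (W \ {w0}) \ G.neighborSet a = (W \ {w0}) \ G.neighborSet b := by
          have hvA : v ∉ (W \ {w0}) \ G.neighborSet a := fun h => hvnW h.1.1
          have hvB : v ∉ (W \ {w0}) \ G.neighborSet b := fun h => hvnW h.1.1
          rw [← Set.insert_diff_self_of_notMem hvA, ← Set.insert_diff_self_of_notMem hvB, heq]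
        apply hw0B
        refine ⟨(a, b), ⟨haU, hav⟩, ⟨hbU, hbv⟩, hab, ?_⟩
        ext x
        simp only [Set.mem_inter_iff, Set.mem_diff, Set.mem_singleton_iff,
          SimpleGraph.mem_neighborSet]
        constructor
        · intro ⟨hxa, hxW, hxw0⟩
          refine ⟨?_, hxW, hxw0⟩
          by_contra h
          have : x ∈ (W \ {w0}) \ G.neighborSet b := ⟨⟨hxW, hxw0⟩, h⟩
          rw [← hAB] at this
          exact this.2 hxa
        · intro ⟨hxb, hxW, hxw0⟩
          refine ⟨?_, hxW, hxw0⟩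
          by_contra h
          have : x ∈ (W \ {w0}) \ G.neighborSet a := ⟨⟨hxW, hxw0⟩, h⟩
          rw [hAB] at this
          exact this.2 hxb
    · -- cardinality
      have hvnWd : v ∉ W \ {w0} := fun h => hdisj' v hvU h.1
      rw [Set.ncard_insert_of_notMem hvnWd (Set.toFinite _),
        Set.ncard_diff_singleton_of_mem hw0W, hSeqW, hW]
      omega
  · -- v ∈ W, so S = U: contradiction with 2^r ≤ s
    exfalso
    have hSU : S ⊆ U := by
      intro x hx
      rcases hadj (hSN x hx) with ⟨h1, h2⟩ | ⟨h1, h2⟩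
      · exact absurd hvW (hdisj' v h1)
      · exact h2
    have hUS : U ⊆ S := by
      intro u hu
      by_contra hus
      obtain ⟨x, hxS, hadjux⟩ := hS.1 u hus
      exact hstU hu (hSU hxS) hadjux
    have hSeqU : S = U := le_antisymm hSU hUS
    have hUfin : U.Finite := Set.toFinite U
    set F : V → Finset V := fun w => hUfin.toFinset.filter (fun x => G.Adj w x) with hFdef
    have hWnotS : ∀ w ∈ W, w ∉ S := fun w hw hws => hdisj' w (hSU hws) hw
    have hFmem : ∀ w ∈ W, F w ∈ (↑(hUfin.toFinset.powerset.erase ∅) : Set (Finset V)) := by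
      intro w hw
      rw [Finset.mem_coe, Finset.mem_erase]
      constructor
      · obtain ⟨x, hxS, hadjwx⟩ := hS.1 w (hWnotS w hw)
        have hxF : x ∈ F w := Finset.mem_filter.mpr ⟨hUfin.mem_toFinset.mpr (hSU hxS), hadjwx⟩
        exact Finset.ne_empty_of_mem hxF
      · exact Finset.mem_powerset.mpr (Finset.filter_subset _ _)
    have hFinj : Set.InjOn F W := by
      intro a ha b hb hab
      by_contra hne'
      apply hS.2 a (hWnotS a ha) b (hWnotS b hb) hne'
      rw [hSeqU]
      ext x
      simp only [Set.mem_inter_iff, SimpleGraph.mem_neighborSet]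
      constructor
      · intro ⟨hxa, hxU⟩
        have : x ∈ F a := Finset.mem_filter.mpr ⟨hUfin.mem_toFinset.mpr hxU, hxa⟩
        rw [hab] at this
        exact ⟨(Finset.mem_filter.mp this).2, hxU⟩
      · intro ⟨hxb, hxU⟩
        have : x ∈ F b := Finset.mem_filter.mpr ⟨hUfin.mem_toFinset.mpr hxU, hxb⟩
        rw [← hab] at this
        exact ⟨(Finset.mem_filter.mp this).2, hxU⟩
    have hle := Set.ncard_le_ncard_of_injOn F hFmem hFinj (Set.toFinite _)
    rw [Set.ncard_coe_finset, Finset.card_erase_of_mem (Finset.empty_mem_powerset _),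
      Finset.card_powerset] at hle
    have hcardU : hUfin.toFinset.card = r :=
      (Set.ncard_eq_toFinset_card U hUfin).symm.trans hU
    rw [hcardU, hW] at hle
    have h1r : 1 ≤ 2 ^ r := Nat.one_le_two_pow
    omega
end

section
/- Let G be a connected bipartite graph of order n = r + s ≥ 4 whose vertex set is partitioned into stable sets U and W with 1 ≤ |U| = r ≤ s = |W|. If λ(Ḡ) = λ(G) + 1, then s ≤ 2^r − 1; moreover, if r < s, then U is the unique LD-code of G. -/
open SimpleGraph

/-- erase distributes over symmetric difference of finsets. -/
lemma erase_sd {β : Type*} [DecidableEq β] (A A' : Finset β) (w : β) :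
    ((A.erase w) \ (A'.erase w)) ∪ ((A'.erase w) \ (A.erase w))
      = ((A \ A') ∪ (A' \ A)).erase w := by
  ext x
  simp only [Finset.mem_union, Finset.mem_sdiff, Finset.mem_erase]
  tauto

/-- In a family `F` of finsets, the number of elements realizable as a singleton
symmetric difference of two members of `F` is less than `|F|`. -/
lemma bad_card_lt {β : Type*} [DecidableEq β] :
    ∀ n (F : Finset (Finset β)), F.card = n → F.Nonempty →
    ∀ B : Finset β, (∀ w ∈ B, ∃ A ∈ F, ∃ A' ∈ F, (A \ A') ∪ (A' \ A) = {w}) →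
    B.card < F.card := by
  intro n
  induction n using Nat.strong_induction_on with
  | _ n ih =>
    intro F hcard hne B hB
    rcases B.eq_empty_or_nonempty with hB0 | ⟨w, hw⟩
    · simpa [hB0] using Finset.card_pos.mpr hne
    · obtain ⟨A, hA, A', hA', hAA⟩ := hB w hw
      have hAne : A ≠ A' := by
        intro h
        rw [h] at hAA
        have := Finset.ext_iff.mp hAA w
        simp at this
      have hagree : ∀ x, x ≠ w → (x ∈ A ↔ x ∈ A') := by
        intro x hx
        have := Finset.ext_iff.mp hAA x
        simp only [Finset.mem_union, Finset.mem_sdiff, Finset.mem_singleton] at this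
        tauto
      have hfAA' : A.erase w = A'.erase w := by
        ext x
        simp only [Finset.mem_erase]
        constructor
        · rintro ⟨h1, h2⟩; exact ⟨h1, (hagree x h1).mp h2⟩
        · rintro ⟨h1, h2⟩; exact ⟨h1, (hagree x h1).mpr h2⟩
      set G : Finset (Finset β) := (F.erase A).image (fun C => C.erase w) with hG
      have hmemG : ∀ C ∈ F, C.erase w ∈ G := by
        intro C hC
        by_cases h : C = A
        · subst h
          rw [hfAA']
          exact Finset.mem_image_of_mem _ (Finset.mem_erase.mpr ⟨Ne.symm hAne, hA'⟩)
        · exact Finset.mem_image_of_mem _ (Finset.mem_erase.mpr ⟨h, hC⟩)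
      have hGne : G.Nonempty := ⟨A.erase w, hmemG A hA⟩
      have hGcard : G.card < F.card := by
        calc G.card ≤ (F.erase A).card := Finset.card_image_le
        _ < F.card := Finset.card_erase_lt_of_mem hA
      have hB' : ∀ w' ∈ B.erase w, ∃ C ∈ G, ∃ C' ∈ G, (C \ C') ∪ (C' \ C) = {w'} := by
        intro w' hw'
        obtain ⟨hne', hw'B⟩ := Finset.mem_erase.mp hw'
        obtain ⟨C, hC, C', hC', hCC⟩ := hB w' hw'B
        refine ⟨C.erase w, hmemG C hC, C'.erase w, hmemG C' hC', ?_⟩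
        rw [erase_sd, hCC, Finset.erase_eq_of_notMem (by simp [Ne.symm hne'])]
      have := ih G.card (hcard ▸ hGcard) G rfl hGne (B.erase w) hB'
      have hBc : B.card = (B.erase w).card + 1 := (Finset.card_erase_add_one hw).symm
      omega

theorem stmt12 {V : Type*} [Fintype V] (G : SimpleGraph V) (U W : Set V) (r s : ℕ)
    (hconn : G.Connected) (hbip : bipartiteWith G U W)
    (hU : U.ncard = r) (hW : W.ncard = s)
    (hr1 : 1 ≤ r) (hrs : r ≤ s) (hn : 4 ≤ r + s)
    (hlam : ldNum Gᶜ = ldNum G + 1) :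
    s ≤ 2 ^ r - 1 ∧
      (r < s →
        (isLDSet G U ∧ U.ncard = ldNum G) ∧
          ∀ S : Set V, isLDSet G S → S.ncard = ldNum G → S = U) := by
  classical
  obtain ⟨hUW, hdisj, hadj⟩ := hbip
  have hUorW : ∀ v : V, v ∈ U ∨ v ∈ W := by
    intro v
    have h := Set.mem_univ v
    rw [← hUW] at h
    exact h
  have hnUW : ∀ v ∈ U, v ∉ W := fun v hv => Set.disjoint_left.mp hdisj hv
  have hWnU : ∀ v ∈ W, v ∉ U := fun v hv => Set.disjoint_right.mp hdisj hv
  have hcross : ∀ u ∈ U, ∀ x, G.Adj u x → x ∈ W := by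
    intro u hu x hx
    rcases hadj hx with ⟨_, h2⟩ | ⟨h1, _⟩
    · exact h2
    · exact absurd h1 (hnUW u hu)
  have hcrossW : ∀ u ∈ W, ∀ x, G.Adj u x → x ∈ U := by
    intro u hu x hx
    rcases hadj hx with ⟨h1, _⟩ | ⟨_, h2⟩
    · exact absurd h1 (hWnU u hu)
    · exact h2
  have hnoUU : ∀ u ∈ U, ∀ x ∈ U, ¬ G.Adj u x := by
    intro u hu x hx h
    exact (hnUW x hx) (hcross u hu x h)
  have hnoWW : ∀ u ∈ W, ∀ x ∈ W, ¬ G.Adj u x := by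
    intro u hu x hx h
    exact (hWnU x hx) (hcrossW u hu x h)
  have huniv : isLDSet G Set.univ :=
    ⟨fun v hv => absurd (Set.mem_univ v) hv, fun u hu => absurd (Set.mem_univ u) hu⟩
  have hnon : {n | ∃ S : Set V, isLDSet G S ∧ S.ncard = n}.Nonempty :=
    ⟨Set.univ.ncard, Set.univ, huniv, rfl⟩
  obtain ⟨S, hS, hScard⟩ : ∃ S : Set V, isLDSet G S ∧ S.ncard = ldNum G :=
    Nat.sInf_mem hnon
  -- every LD-code of `G` is `U`, or is `W` together with a vertex of `U` adjacent to all of `W`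
  have key : ∀ T : Set V, isLDSet G T → T.ncard = ldNum G →
      T = U ∨ (T = W ∧ ∃ u ∈ U, ∀ x ∈ W, G.Adj u x) := by
    intro T hT hTcard
    have hTnc : ¬ isLDSet Gᶜ T := by
      intro h
      have hle : ldNum Gᶜ ≤ T.ncard := Nat.sInf_le ⟨T, h, rfl⟩
      omega
    have hdist : ∀ u ∉ T, ∀ v ∉ T, u ≠ v →
        (Gᶜ.neighborSet u ∩ T ≠ Gᶜ.neighborSet v ∩ T) := by
      intro u hu v hv huv heq
      apply hT.2 u hu v hv huv
      ext x
      by_cases hxT : x ∈ T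
      · have h1 := Set.ext_iff.mp heq x
        simp only [Set.mem_inter_iff, SimpleGraph.mem_neighborSet, SimpleGraph.compl_adj] at h1 ⊢
        have hux : u ≠ x := fun e => hu (e ▸ hxT)
        have hvx : v ≠ x := fun e => hv (e ▸ hxT)
        constructor
        · intro ⟨hadj', _⟩
          refine ⟨?_, hxT⟩
          by_contra h2
          exact ((h1.mpr ⟨⟨hvx, h2⟩, hxT⟩).1.2) hadj'
        · intro ⟨hadj', _⟩
          refine ⟨?_, hxT⟩
          by_contra h2
          exact ((h1.mp ⟨⟨hux, h2⟩, hxT⟩).1.2) hadj'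
      · simp [hxT]
    have hndom : ¬ isDomSet Gᶜ T := fun h => hTnc ⟨h, hdist⟩
    rw [isDomSet] at hndom
    push_neg at hndom
    obtain ⟨u, huT, hu⟩ := hndom
    have hUadj : ∀ x ∈ T, G.Adj u x := by
      intro x hx
      have h := hu x hx
      rw [SimpleGraph.compl_adj] at h
      push_neg at h
      exact h (fun e => huT (e ▸ hx))
    rcases hUorW u with huU | huW
    · right
      have hTW : T ⊆ W := fun x hx => hcross u huU x (hUadj x hx)
      have hWT : W ⊆ T := by
        intro v hv
        by_contra hvT
        obtain ⟨x, hxT, hadjvx⟩ := hT.1 v hvT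
        exact (hnoWW v hv x (hTW hxT)) hadjvx
      have hTeq : T = W := Set.Subset.antisymm hTW hWT
      exact ⟨hTeq, u, huU, fun x hx => hUadj x (by rw [hTeq]; exact hx)⟩
    · left
      have hTU : T ⊆ U := fun x hx => hcrossW u huW x (hUadj x hx)
      have hUT : U ⊆ T := by
        intro v hv
        by_contra hvT
        obtain ⟨x, hxT, hadjvx⟩ := hT.1 v hvT
        exact (hnoUU v hv x (hTU hxT)) hadjvx
      exact Set.Subset.antisymm hTU hUT
  rcases eq_or_lt_of_le hrs with heq | hlt
  · subst heq
    refine ⟨?_, fun hc => absurd hc (lt_irrefl _)⟩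
    have h2 : r < 2 ^ r := Nat.lt_two_pow_self
    omega
  -- now r < s
  · -- finsets for U and W
    set FU := (Set.toFinite U).toFinset with hFUdef
    set FW := (Set.toFinite W).toFinset with hFWdef
    have hFU : ∀ x, x ∈ FU ↔ x ∈ U := fun x => Set.Finite.mem_toFinset _
    have hFW : ∀ x, x ∈ FW ↔ x ∈ W := fun x => Set.Finite.mem_toFinset _
    have hFUcard : FU.card = r := by
      rw [← hU, Set.ncard_eq_toFinset_card U (Set.toFinite U)]
    have hFWcard : FW.card = s := by
      rw [← hW, Set.ncard_eq_toFinset_card W (Set.toFinite W)]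
    -- the LD-code S equals U
    have hSU : S = U := by
      rcases key S hS hScard with h | ⟨hSW, u', hu'U, hu'adj⟩
      · exact h
      · exfalso
        have hlds : ldNum G = s := by rw [← hScard, hSW, hW]
        have hSnW : ∀ v ∈ U, v ∉ S := by
          intro v hv
          rw [hSW]
          exact hnUW v hv
        -- neighbor traces as finsets
        set Nu : V → Finset V := fun u => Finset.univ.filter (fun x => G.Adj u x) with hNudef
        have hNumem : ∀ u x, x ∈ Nu u ↔ G.Adj u x := by
          intro u x
          simp [hNudef]
        have hinj : ∀ u ∈ U, ∀ u' ∈ U, Nu u = Nu u' → u = u' := by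
          intro a ha b hb h
          by_contra hne
          apply hS.2 a (hSnW a ha) b (hSnW b hb) hne
          ext x
          simp only [Set.mem_inter_iff, SimpleGraph.mem_neighborSet]
          have := Finset.ext_iff.mp h x
          rw [hNumem, hNumem] at this
          tauto
        set F := FU.image Nu with hFdef
        have hFcard : F.card = r := by
          rw [hFdef, Finset.card_image_of_injOn, hFUcard]
          intro a ha b hb h
          exact hinj a ((hFU a).mp ha) b ((hFU b).mp hb) h
        set B := FW.filter
          (fun w => ∃ u ∈ U, ∃ u2 ∈ U, (Nu u \ Nu u2) ∪ (Nu u2 \ Nu u) = {w}) with hBdef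
        have hBlt : B.card < F.card := by
          apply bad_card_lt F.card F rfl
            ⟨Nu u', Finset.mem_image_of_mem _ ((hFU u').mpr hu'U)⟩
          intro w hwB
          rw [hBdef, Finset.mem_filter] at hwB
          obtain ⟨hwFW, a, haU, b, hbU, hd⟩ := hwB
          exact ⟨Nu a, Finset.mem_image_of_mem _ ((hFU a).mpr haU),
            Nu b, Finset.mem_image_of_mem _ ((hFU b).mpr hbU), hd⟩
        have hBFW : B ⊆ FW := Finset.filter_subset _ _
        obtain ⟨w0, hw0FW, hw0B⟩ : ∃ w0 ∈ FW, w0 ∉ B := by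
          by_contra h
          push_neg at h
          have := Finset.card_le_card (fun x hx => h x hx)
          omega
        have hw0W : w0 ∈ W := (hFW w0).mp hw0FW
        have hgood : ∀ a ∈ U, ∀ b ∈ U, (Nu a \ Nu b) ∪ (Nu b \ Nu a) ≠ {w0} := by
          intro a ha b hb h
          exact hw0B (Finset.mem_filter.mpr ⟨hw0FW, a, ha, b, hb, h⟩)
        set S0 : Set V := insert u' (W \ {w0}) with hS0def
        have hu'nWd : u' ∉ W \ {w0} := fun h => (hnUW u' hu'U) h.1
        have hS0card : S0.ncard = s := by
          rw [hS0def, Set.ncard_insert_of_notMem hu'nWd,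
            Set.ncard_diff_singleton_of_mem hw0W, hW]
          omega
        obtain ⟨w1, hw1W, hw1ne⟩ : ∃ w1, w1 ∈ W ∧ w1 ≠ w0 := by
          apply Set.exists_ne_of_one_lt_ncard
          omega
        have hLD0 : isLDSet Gᶜ S0 := by
          constructor
          · intro v hv
            rcases hUorW v with hvU | hvW
            · refine ⟨u', Set.mem_insert _ _, ?_⟩
              rw [SimpleGraph.compl_adj]
              exact ⟨fun e => hv (e ▸ Set.mem_insert _ _), hnoUU v hvU u' hu'U⟩
            · have hvw0 : v = w0 := by
                by_contra hne
                exact hv (Set.mem_insert_of_mem _ ⟨hvW, hne⟩)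
              refine ⟨w1, Set.mem_insert_of_mem _ ⟨hw1W, hw1ne⟩, ?_⟩
              rw [SimpleGraph.compl_adj]
              exact ⟨fun e => hw1ne (by rw [← e, hvw0]), hnoWW v hvW w1 hw1W⟩
          · intro a ha b hb hab heq
            have hclass : ∀ c, c ∉ S0 → (c ∈ U ∧ c ≠ u') ∨ c = w0 := by
              intro c hc
              rcases hUorW c with h | h
              · exact Or.inl ⟨h, fun e => hc (e ▸ Set.mem_insert _ _)⟩
              · right
                by_contra hne
                exact hc (Set.mem_insert_of_mem _ ⟨h, hne⟩)
            have hu'tr : ∀ c ∈ U, c ≠ u' → u' ∈ Gᶜ.neighborSet c ∩ S0 := by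
              intro c hc hcne
              refine ⟨?_, Set.mem_insert _ _⟩
              rw [SimpleGraph.mem_neighborSet, SimpleGraph.compl_adj]
              exact ⟨hcne, hnoUU c hc u' hu'U⟩
            have hw0tr : u' ∉ Gᶜ.neighborSet w0 ∩ S0 := by
              rintro ⟨hadj', _⟩
              rw [SimpleGraph.mem_neighborSet, SimpleGraph.compl_adj] at hadj'
              exact hadj'.2 ((hu'adj w0 hw0W).symm)
            rcases hclass a ha with ⟨haU, hane⟩ | ha0 <;>
              rcases hclass b hb with ⟨hbU, hbne⟩ | hb0
            · -- both in U : contradiction with hgood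
              exfalso
              apply hgood a haU b hbU
              have hagree : ∀ x, x ≠ w0 → (x ∈ Nu a ↔ x ∈ Nu b) := by
                intro x hx
                rw [hNumem, hNumem]
                have hiff : ∀ c ∈ U, x ∈ W → c ∉ S0 →
                    (G.Adj c x ↔ ¬ (x ∈ Gᶜ.neighborSet c ∩ S0)) := by
                  intro c hc hxW hcS0
                  have hxS0 : x ∈ S0 := Set.mem_insert_of_mem _ ⟨hxW, hx⟩
                  have hcx : c ≠ x := fun e => hcS0 (e ▸ hxS0)
                  simp only [Set.mem_inter_iff, SimpleGraph.mem_neighborSet,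
                    SimpleGraph.compl_adj]
                  constructor
                  · intro h hcon
                    exact hcon.1.2 h
                  · intro h
                    by_contra h2
                    exact h ⟨⟨hcx, h2⟩, hxS0⟩
                constructor
                · intro h
                  have hxW : x ∈ W := hcross a haU x h
                  by_contra h2
                  have h3 := (hiff a haU hxW ha).mp h
                  have h4 := (hiff b hbU hxW hb).mpr ?_
                  · exact h2 h4
                  · intro hcon
                    exact h3 (heq ▸ hcon)
                · intro h
                  have hxW : x ∈ W := hcross b hbU x h
                  by_contra h2
                  have h3 := (hiff b hbU hxW hb).mp h
                  have h4 := (hiff a haU hxW ha).mpr ?_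
                  · exact h2 h4
                  · intro hcon
                    exact h3 (heq ▸ hcon)
              have hNune : Nu a ≠ Nu b := fun h => hab (hinj a haU b hbU h)
              have hw0mem : (w0 ∈ Nu a ∧ w0 ∉ Nu b) ∨ (w0 ∈ Nu b ∧ w0 ∉ Nu a) := by
                by_contra h
                push_neg at h
                apply hNune
                ext x
                by_cases hx : x = w0
                · subst hx
                  exact ⟨h.1, h.2⟩
                · exact hagree x hx
              ext x
              simp only [Finset.mem_union, Finset.mem_sdiff, Finset.mem_singleton]
              constructor
              · intro hx
                by_contra hxx
                rcases hx with ⟨h1, h2⟩ | ⟨h1, h2⟩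
                · exact h2 ((hagree x hxx).mp h1)
                · exact h2 ((hagree x hxx).mpr h1)
              · intro hx
                subst hx
                tauto
            · subst hb0
              exact hw0tr (heq ▸ hu'tr a haU hane)
            · subst ha0
              exact hw0tr (heq.symm ▸ hu'tr b hbU hbne)
            · exact hab (ha0.trans hb0.symm)
        have hle : ldNum Gᶜ ≤ s := Nat.sInf_le ⟨S0, hLD0, hS0card⟩
        omega
    have hldr : ldNum G = r := by rw [← hScard, hSU, hU]
    have hULD : isLDSet G U := hSU ▸ hS
    -- part 1 : injection from W into nonempty subsets of U
    have hpart1 : s ≤ 2 ^ r - 1 := by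
      set Nw : V → Finset V := fun w => Finset.univ.filter (fun x => G.Adj w x ∧ x ∈ U)
        with hNwdef
      have hNwmem : ∀ w x, x ∈ Nw w ↔ (G.Adj w x ∧ x ∈ U) := by
        intro w x
        simp [hNwdef]
      have hcardle : FW.card ≤ (FU.powerset.erase ∅).card := by
        apply Finset.card_le_card_of_injOn Nw
        · intro w hwFW
          have hwW : w ∈ W := (hFW w).mp hwFW
          rw [Finset.mem_coe, Finset.mem_erase]
          constructor
          · obtain ⟨x, hxU, hadjx⟩ := hULD.1 w (hWnU w hwW)
            intro h0
            have : x ∈ Nw w := (hNwmem w x).mpr ⟨hadjx, hxU⟩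
            rw [h0] at this
            exact absurd this (Finset.notMem_empty x)
          · rw [Finset.mem_powerset]
            intro x hx
            exact (hFU x).mpr ((hNwmem w x).mp hx).2
        · intro a ha b hb h
          by_contra hne
          have haW : a ∈ W := (hFW a).mp ha
          have hbW : b ∈ W := (hFW b).mp hb
          apply hULD.2 a (hWnU a haW) b (hWnU b hbW) hne
          ext x
          simp only [Set.mem_inter_iff, SimpleGraph.mem_neighborSet]
          have := Finset.ext_iff.mp h x
          rw [hNwmem, hNwmem] at this
          tauto
      rw [hFWcard, Finset.card_erase_of_mem (Finset.empty_mem_powerset FU),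
        Finset.card_powerset, hFUcard] at hcardle
      exact hcardle
    refine ⟨hpart1, fun _ => ⟨⟨hULD, by rw [hU, hldr]⟩, ?_⟩⟩
    intro T hT hTcard
    rcases key T hT hTcard with h | ⟨hTW, _⟩
    · exact h
    · exfalso
      rw [hTW, hW, hldr] at hTcard
      omega
end

section
/- Let H be a finite bipartite simple graph of order at least 4 all of whose connected components are cactus graphs. Then |V(H)| ≥ (3/4)|E(H)| + 1, i.e., 4|V(H)| ≥ 3|E(H)| + 4. -/
/-!
Induct on the number of edges to prove the stronger `3 |E| + 4 c ≤ 4 |V|`, where `c` is the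
number of connected components. Deleting a bridge loses one edge and gains one component. An
edge that is not a bridge lies on a cycle, of length `L ≥ 4` since the graph is bipartite.
Delete all edges of that cycle: once one of them is gone, no other edge of the cycle lies on a
cycle (the cactus condition), so each of the remaining `L - 1` deletions splits off a new
component, and `3 L ≤ 4 (L - 1)`. Finally `c ≥ 1` because the graph is nonempty.
-/

open SimpleGraph

/-- A connected graph is a cactus if no edge is shared by two different cycles,
i.e. any two cycles having a common edge have the same edge set. -/
def isCactus {α : Type*} (K : SimpleGraph α) : Prop :=
  K.Connected ∧ ∀ ⦃u v : α⦄ (c₁ : K.Walk u u) (c₂ : K.Walk v v),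
    c₁.IsCycle → c₂.IsCycle → ∀ e, e ∈ c₁.edges → e ∈ c₂.edges →
      ∀ e', e' ∈ c₁.edges ↔ e' ∈ c₂.edges

/-- Every connected component of `H` is a cactus. -/
def allComponentsCactus {α : Type*} (H : SimpleGraph α) : Prop :=
  ∀ c : H.ConnectedComponent, isCactus (H.induce c.supp)

/-- `H` is bipartite: the vertices can be partitioned into two sets with no edge inside either. -/
def isBipartite {α : Type*} (H : SimpleGraph α) : Prop :=
  ∃ A : Set α, ∀ ⦃u v : α⦄, H.Adj u v → (u ∈ A ↔ v ∉ A)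

open Finset

section Bipartite

variable {V : Type*} {G G' : SimpleGraph V}

theorem isBipartite.mono (h : G' ≤ G) (hG : isBipartite G) : isBipartite G' :=
  let ⟨A, hA⟩ := hG
  ⟨A, fun _ _ huv ↦ hA (h huv)⟩

theorem isBipartite.even_length (hG : isBipartite G) {u : V} (p : G.Walk u u) :
    Even p.length := by
  classical
  obtain ⟨A, hA⟩ := hG
  let c : G.Coloring Bool := Coloring.mk (fun v ↦ decide (v ∈ A)) fun huv ↦ by
    have := hA huv
    rw [Ne, decide_eq_decide]
    tauto
  exact (c.even_length_iff_congr p).mpr Iff.rfl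

end Bipartite

namespace SimpleGraph

variable {V : Type*} {G G' : SimpleGraph V}

def IsCactusForest (G : SimpleGraph V) : Prop :=
  ∀ ⦃u v : V⦄ (c₁ : G.Walk u u) (c₂ : G.Walk v v), c₁.IsCycle → c₂.IsCycle →
    ∀ e ∈ c₁.edges, e ∈ c₂.edges → c₁.edges ⊆ c₂.edges

theorem IsCactusForest.mono (h : G' ≤ G) (hG : G.IsCactusForest) : G'.IsCactusForest := by
  intro u v c₁ c₂ h₁ h₂ e he₁ he₂
  simpa using hG (c₁.mapLe h) (c₂.mapLe h) (h₁.mapLe h) (h₂.mapLe h) e (by simpa) (by simpa)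

theorem Walk.mem_supp_of_mem_support {u v x : V} (p : G.Walk u v) (hx : x ∈ p.support) :
    x ∈ (G.connectedComponentMk u).supp := by
  classical
  exact ConnectedComponent.eq.mpr ⟨(p.takeUntil x hx).reverse⟩

theorem Walk.map_edges_induce {s : Set V} {u v : V} (p : G.Walk u v)
    (hp : ∀ x ∈ p.support, x ∈ s) :
    (p.induce s hp).edges.map (Sym2.map Subtype.val) = p.edges := by
  conv_rhs => rw [← p.map_induce hp]
  exact (Walk.edges_map (Embedding.induce s).toHom (p.induce s hp)).symm

theorem Walk.mem_edges_induce_iff {s : Set V} {u v : V} (p : G.Walk u v)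
    (hp : ∀ x ∈ p.support, x ∈ s) {d : Sym2 s} :
    d ∈ (p.induce s hp).edges ↔ d.map Subtype.val ∈ p.edges := by
  rw [← p.map_edges_induce hp,
    List.mem_map_of_injective (Sym2.map.injective Subtype.val_injective)]

theorem _root_.allComponentsCactus.isCactusForest (h : allComponentsCactus G) :
    G.IsCactusForest := by
  intro u v c₁ c₂ h₁ h₂ e he₁ he₂
  set C := G.connectedComponentMk u
  have hs₁ : ∀ x ∈ c₁.support, x ∈ C.supp := fun x ↦ c₁.mem_supp_of_mem_support
  have hs₂ : ∀ x ∈ c₂.support, x ∈ C.supp := by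
    obtain ⟨a, b⟩ := e
    intro x hx
    rw [ConnectedComponent.mem_supp_iff, c₂.mem_supp_of_mem_support hx,
      ← c₂.mem_supp_of_mem_support (c₂.fst_mem_support_of_mem_edges he₂)]
    exact hs₁ a (c₁.fst_mem_support_of_mem_edges he₁)
  have hinj : Function.Injective (Embedding.induce (G := G) C.supp).toHom := Subtype.val_injective
  have hd₁ : (c₁.induce C.supp hs₁).IsCycle := by
    rwa [← Walk.isCycle_map_iff_of_injective hinj, Walk.map_induce]
  have hd₂ : (c₂.induce C.supp hs₂).IsCycle := by
    rwa [← Walk.isCycle_map_iff_of_injective hinj, Walk.map_induce]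
  rw [← c₁.map_edges_induce hs₁, List.mem_map] at he₁
  obtain ⟨d, hd, rfl⟩ := he₁
  have key := (h C).2 _ _ hd₁ hd₂ d hd ((c₂.mem_edges_induce_iff hs₂).mpr he₂)
  intro e' he'
  rw [← c₁.map_edges_induce hs₁, List.mem_map] at he'
  obtain ⟨d', hd', rfl⟩ := he'
  exact (c₂.mem_edges_induce_iff hs₂).mp ((key d').mp hd')

theorem IsBridge.card_connectedComponent_lt [Finite V] {e : Sym2 V} (hb : G.IsBridge e)
    (he : e ∈ G.edgeSet) :
    Nat.card G.ConnectedComponent < Nat.card (G.deleteEdges {e}).ConnectedComponent := by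
  classical
  obtain ⟨x, y⟩ := e
  have := Fintype.ofFinite G.ConnectedComponent
  have := Fintype.ofFinite (G.deleteEdges {s(x, y)}).ConnectedComponent
  simp only [Nat.card_eq_fintype_card]
  refine Fintype.card_lt_of_surjective_not_injective _
    (ConnectedComponent.surjective_map_ofLE (G.deleteEdges_le _)) fun hinj ↦ hb ?_
  refine ConnectedComponent.eq.mp (hinj ?_)
  simpa [ConnectedComponent.map_mk] using (G.mem_edgeSet.mp he).reachable

theorem card_connectedComponent_add_card_le_deleteEdges [Finite V] (S : Finset (Sym2 V))
    (hS : ↑S ⊆ G.edgeSet) (hbr : ∀ G' ≤ G, ∀ e ∈ S, e ∈ G'.edgeSet → G'.IsBridge e) :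
    Nat.card G.ConnectedComponent + #S ≤ Nat.card (G.deleteEdges S).ConnectedComponent := by
  classical
  induction S using Finset.induction_on generalizing G with
  | empty => simp
  | insert e S heS ih =>
    have he : e ∈ G.edgeSet := hS (mem_insert_self e S)
    have hG₁ := (hbr G le_rfl e (mem_insert_self e S) he).card_connectedComponent_lt he
    have hS₁ : ↑S ⊆ (G.deleteEdges {e}).edgeSet := fun f hf ↦ by
      rw [edgeSet_deleteEdges]
      exact ⟨hS (mem_insert_of_mem hf), by rintro rfl; exact heS hf⟩
    have := ih hS₁ fun G' hG' f hf ↦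
      hbr G' (hG'.trans (G.deleteEdges_le _)) f (mem_insert_of_mem hf)
    rw [deleteEdges_deleteEdges, ← Set.insert_eq, ← coe_insert] at this
    rw [card_insert_of_notMem heS]
    omega

theorem ncard_edgeSet_deleteEdges_add [Finite V] {s : Set (Sym2 V)} (hs : s ⊆ G.edgeSet) :
    (G.deleteEdges s).edgeSet.ncard + s.ncard = G.edgeSet.ncard := by
  rw [edgeSet_deleteEdges, Set.ncard_sdiff_add_ncard_of_subset hs]

theorem IsCactusForest.isBridge_of_mem_edges (hG : G.IsCactusForest) {u : V} {c : G.Walk u u}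
    (hc : c.IsCycle) {e f : Sym2 V} (he : e ∈ c.edges) (hf : f ∈ c.edges)
    (hG' : G' ≤ G.deleteEdges {e}) (hfG' : f ∈ G'.edgeSet) : G'.IsBridge f := by
  refine (isBridge_iff_forall_cycle_notMem hfG').mpr fun v p hp hfp ↦ ?_
  have hle : G' ≤ G := hG'.trans (G.deleteEdges_le _)
  have hep : e ∈ p.edges := by
    simpa using hG c (p.mapLe hle) hc (hp.mapLe hle) f hf (by simpa using hfp) he
  simpa using edgeSet_mono hG' (p.edges_subset_edgeSet hep)

theorem IsCactusForest.exists_deleteEdges_card_connectedComponent [Finite V]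
    (hG : G.IsCactusForest) (hbip : isBipartite G) {e : Sym2 V} (he : e ∈ G.edgeSet) :
    ∃ S : Finset (Sym2 V), ↑S ⊆ G.edgeSet ∧ S.Nonempty ∧
      3 * #S + 4 * Nat.card G.ConnectedComponent ≤
        4 * Nat.card (G.deleteEdges S).ConnectedComponent := by
  classical
  by_cases hbr : G.IsBridge e
  · refine ⟨{e}, by simpa using he, singleton_nonempty e, ?_⟩
    have := hbr.card_connectedComponent_lt he
    rw [card_singleton, coe_singleton]
    omega
  obtain ⟨u, c, hc, hec⟩ : ∃ (u : V) (c : G.Walk u u), c.IsCycle ∧ e ∈ c.edges := by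
    simpa [isBridge_iff_forall_cycle_notMem he] using hbr
  have hcS : ↑c.edges.toFinset ⊆ G.edgeSet := fun f hf ↦
    c.edges_subset_edgeSet (List.mem_toFinset.mp hf)
  have hlen : 4 ≤ #c.edges.toFinset := by
    rw [List.toFinset_card_of_nodup hc.edges_nodup, Walk.length_edges]
    obtain ⟨k, hk⟩ := hbip.even_length c
    have := hc.three_le_length
    omega
  have hS : ↑(c.edges.toFinset.erase e) ⊆ (G.deleteEdges {e}).edgeSet := fun f hf ↦ by
    obtain ⟨hfe, hf⟩ := mem_erase.mp hf
    rw [edgeSet_deleteEdges]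
    exact ⟨hcS hf, hfe⟩
  have hgain := card_connectedComponent_add_card_le_deleteEdges _ hS fun G' hG' f hf ↦
    hG.isBridge_of_mem_edges hc hec (List.mem_toFinset.mp (mem_of_mem_erase hf)) hG'
  rw [deleteEdges_deleteEdges, coe_erase, Set.union_sdiff_cancel (by simpa using hec),
    card_erase_of_mem (List.mem_toFinset.mpr hec)] at hgain
  have := ConnectedComponent.card_le_card_of_le (G.deleteEdges_le {e})
  exact ⟨_, hcS, ⟨e, List.mem_toFinset.mpr hec⟩, by omega⟩

theorem IsCactusForest.three_mul_ncard_edgeSet_add_four_mul_card_connectedComponent_le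
    [Finite V] (hG : G.IsCactusForest) (hbip : isBipartite G) :
    3 * G.edgeSet.ncard + 4 * Nat.card G.ConnectedComponent ≤ 4 * Nat.card V := by
  induction hm : G.edgeSet.ncard using Nat.strong_induction_on generalizing G with
  | _ m ih =>
  obtain hE | ⟨e, he⟩ := G.edgeSet.eq_empty_or_nonempty
  · have := Nat.card_le_card_of_surjective _ fun C : G.ConnectedComponent ↦ C.exists_rep
    rw [hE, Set.ncard_empty] at hm
    omega
  obtain ⟨S, hSG, hSne, hgain⟩ := hG.exists_deleteEdges_card_connectedComponent hbip he
  have hcount := ncard_edgeSet_deleteEdges_add hSG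
  rw [Set.ncard_coe_finset] at hcount
  have := hSne.card_pos
  have := ih _ (by omega) (G := G.deleteEdges S) (hG.mono (G.deleteEdges_le _))
    (hbip.mono (G.deleteEdges_le _)) rfl
  omega

end SimpleGraph

theorem stmt14 {V : Type*} [Fintype V] (H : SimpleGraph V)
    (hn : 4 ≤ Fintype.card V) (hbip : isBipartite H)
    (hcac : allComponentsCactus H) :
    4 * Fintype.card V ≥ 3 * H.edgeSet.ncard + 4 := by
  have : Nonempty V := Fintype.card_pos_iff.mp (by omega)
  have hbound :=
    hcac.isCactusForest.three_mul_ncard_edgeSet_add_four_mul_card_connectedComponent_le hbip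
  have : 0 < Nat.card H.ConnectedComponent := Nat.card_pos
  rw [Nat.card_eq_fintype_card (α := V)] at hbound
  omega
end

section
/- There is no connected bipartite graph G, with stable sets U and W of sizes |U| = r ≤ s = |W| and order r + s ≥ 4, satisfying λ(Ḡ) = λ(G) + 1 together with 3r/2 ≤ s < 3r/2 + 1 (i.e., 3r ≤ 2s and 2s < 3r + 2). -/
/-!
Let `S` be a minimum LD-set of `G`. Since `λ(Ḡ) > λ(G)`, `S` is not an LD-set of `Ḡ`; as the
traces of `G` and `Ḡ` on `S` determine each other, some vertex `v ∉ S` is adjacent to all of `S`,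
and then `S` is a whole side `X` of the bipartition, with `v` on the other side `Y`.

Encode each `y ∈ Y` by its neighbourhood `g y ∈ 𝔽₂^X`; `g` is injective since `X` is locating.
For `x₀ ∈ X` and `y₁ ∈ N(x₀)`, the set `(X ∖ {x₀}) ∪ {y₁}` has size `λ(G)`, so it is not an
LD-set of `Ḡ`, which yields two vertices of `Y ∖ {y₁}` whose codes differ exactly in coordinate
`x₀`. Starting from `y₁ = v`, this gives two disjoint edges in every direction of the cube
`g(Y) ⊆ 𝔽₂^X`. Their `2|X|` incidence vectors lie in the even-weight hyperplane of `𝔽₂^Y`, and the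
two moment maps `φ ↦ Σ φ(y) g(y)` and `φ ↦ Σ φ(y) g(y) g(y)ᵀ` show that their relations form a
space of dimension at most `|X|/2`. Hence `2|X| ≤ |Y| - 1 + |X|/2`, i.e. `3|X| + 2 ≤ 2|Y|`,
which contradicts `2s < 3r + 2` if `X = U`, and `r ≤ s` if `X = W`.
-/

open SimpleGraph

open Module

section Balanced

variable {ι : Type*} [Fintype ι]

theorem two_mul_finrank_le_card_of_forall_exists_eq {F : Type*} [Field F]
    (K : Submodule F (ι → F))
    (hK : ∀ j, ∀ a ∈ K, a j ≠ 0 → ∃ k ≠ j, ∀ b ∈ K, b k = b j) :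
    2 * finrank F K ≤ Fintype.card ι := by
  classical
  -- `K` embeds into the functions on its nonzero coordinate functionals, each of which is
  -- the restriction of at least two coordinates.
  let ev : ι → (K →ₗ[F] F) := fun j => LinearMap.proj j ∘ₗ K.subtype
  let active : Finset ι := {j | ev j ≠ 0}
  let Φ : K →ₗ[F] (active.image ev → F) := LinearMap.pi fun φ => φ.1
  have hΦ : Function.Injective Φ := by
    refine (injective_iff_map_eq_zero Φ).2 fun a ha => Subtype.ext (funext fun j => ?_)
    by_cases hj : ev j = 0
    · exact LinearMap.congr_fun hj a
    · exact congr_fun ha ⟨ev j, Finset.mem_image_of_mem ev (by simpa [active] using hj)⟩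
  have hfib : ∀ φ ∈ active.image ev, 2 ≤ {j ∈ active | ev j = φ}.card := by
    simp only [Finset.mem_image]
    rintro _ ⟨j, hj, rfl⟩
    obtain ⟨a, ha⟩ : ∃ a : K, ev j a ≠ 0 := by
      by_contra! h
      exact (Finset.mem_filter.1 hj).2 (LinearMap.ext h)
    obtain ⟨k, hkj, hk⟩ := hK j a a.2 ha
    have hevk : ev k = ev j := LinearMap.ext fun b => hk b b.2
    have hk_act : k ∈ active := by simpa [active, hevk] using hj
    calc 2 = ({k, j} : Finset ι).card := (Finset.card_pair hkj).symm
      _ ≤ _ := Finset.card_le_card (by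
        intro i hi
        rcases Finset.mem_insert.1 hi with rfl | hi
        · simp [hk_act, hevk]
        · simp [Finset.mem_singleton.1 hi, hj])
  calc 2 * finrank F K ≤ 2 * (active.image ev).card := by
        have := LinearMap.finrank_le_finrank_of_injective hΦ
        simp only [Module.finrank_pi, Fintype.card_coe] at this
        omega
    _ ≤ active.card := Finset.mul_card_image_le_card _ _ hfib
    _ ≤ Fintype.card ι := Finset.card_le_univ _

def balancedSubmodule {R : Type*} [CommSemiring R] (h : ι → ι → R) : Submodule R (ι → R) where
  carrier := {a | ∀ j k, a j * h j k = a k * h k j}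
  zero_mem' := by simp
  add_mem' := by
    intro a b ha hb j k
    simp only [Pi.add_apply, add_mul, ha j k, hb j k]
  smul_mem' := by
    intro c a ha j k
    simp only [Pi.smul_apply, smul_eq_mul, mul_assoc, ha j k]

theorem two_mul_finrank_balancedSubmodule_le (h : ι → ι → ZMod 2)
    (hh : ∀ j, ∃ k ≠ j, h j k = 1) :
    2 * finrank (ZMod 2) (balancedSubmodule h) ≤ Fintype.card ι := by
  have eq_one_of_ne_zero : ∀ x : ZMod 2, x ≠ 0 → x = 1 := by decide
  have eq_one_of_mul_eq_one : ∀ x y : ZMod 2, x * y = 1 → y = 1 := by decide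
  refine two_mul_finrank_le_card_of_forall_exists_eq _ fun j a ha haj => ?_
  obtain ⟨k, hkj, hjk⟩ := hh j
  have hkj' : h k j = 1 := by
    have := ha j k
    rw [eq_one_of_ne_zero _ haj, hjk, one_mul] at this
    exact eq_one_of_mul_eq_one _ _ this.symm
  exact ⟨k, hkj, fun b hb => by simpa [hjk, hkj'] using (hb j k).symm⟩

end Balanced

theorem add_eq_single_of_forall_ne_eq {ι : Type*} [DecidableEq ι] {a b : ι → ZMod 2} {i : ι}
    (hab : a ≠ b) (h : ∀ k ≠ i, a k = b k) : a + b = Pi.single i 1 := by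
  have hi : a i ≠ b i := fun hi => hab <| funext fun k => by
    by_cases hk : k = i
    · exact hk ▸ hi
    · exact h k hk
  funext k
  by_cases hk : k = i
  · subst hk
    have : ∀ x y : ZMod 2, x ≠ y → x + y = 1 := by decide
    simpa using this _ _ hi
  · simp [Pi.single_eq_of_ne hk, h k hk, CharTwo.add_self_eq_zero]

theorem mul_add_mul_of_add_eq {ι : Type*} {u v e : ι → ZMod 2} (h : u + v = e) (j l : ι) :
    u j * u l + v j * v l = e j * u l + u j * e l + e j * e l := by
  obtain rfl : v = e + u := by rw [← h, add_comm u, add_assoc, ZModModule.add_self, add_zero]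
  simp only [Pi.add_apply]
  linear_combination (u j * u l) * CharTwo.two_eq_zero (R := ZMod 2)

section Incidence

variable {κ τ : Type*} [Fintype κ] [Fintype τ] [DecidableEq κ]

def incidence (R : Type*) [CommSemiring R] (p q : τ → κ) : (τ → R) →ₗ[R] (κ → R) :=
  Fintype.linearCombination R fun t => Pi.single (p t) 1 + Pi.single (q t) 1

theorem linearCombination_incidence {R : Type*} [CommSemiring R] (p q : τ → κ) (c : τ → R)
    (ψ : κ → R) :
    Fintype.linearCombination R ψ (incidence R p q c) = ∑ t, c t * (ψ (p t) + ψ (q t)) := by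
  conv_lhs => arg 2; rw [incidence, Fintype.linearCombination_apply]
  rw [map_sum]
  simp [Fintype.linearCombination_apply_single, mul_add]

theorem finrank_range_incidence_lt [Nonempty κ] (p q : τ → κ) :
    finrank (ZMod 2) (LinearMap.range (incidence (ZMod 2) p q)) < Fintype.card κ := by
  obtain ⟨k⟩ := ‹Nonempty κ›
  have hne : LinearMap.range (incidence (ZMod 2) p q) ≠ ⊤ := fun htop => by
    obtain ⟨c, hc⟩ := htop ▸ Submodule.mem_top (x := Pi.single k (1 : ZMod 2))
    have := linearCombination_incidence p q c 1
    rw [hc, Fintype.linearCombination_apply_single] at this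
    simp [CharTwo.add_self_eq_zero] at this
  simpa using Submodule.finrank_lt hne

end Incidence

section Hypercube

variable {ι κ : Type*} [Fintype ι] [Fintype κ] [DecidableEq ι] [DecidableEq κ]
  {g : κ → ι → ZMod 2} {w w' x x' : ι → κ}

local notation "Θ" => incidence (ZMod 2) (Sum.elim w x) (Sum.elim w' x')

theorem apply_inl_eq_apply_inr_of_mem_ker_incidence
    (hw : ∀ i, g (w i) + g (w' i) = Pi.single i 1) (hx : ∀ i, g (x i) + g (x' i) = Pi.single i 1)
    {c : ι ⊕ ι → ZMod 2} (hc : c ∈ LinearMap.ker Θ) (j : ι) :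
    c (Sum.inl j) = c (Sum.inr j) := by
  have := linearCombination_incidence (Sum.elim w x) (Sum.elim w' x') c fun k => g k j
  rw [LinearMap.mem_ker.1 hc, map_zero, Fintype.sum_sum_type] at this
  simp only [Sum.elim_inl, Sum.elim_inr, ← Pi.add_apply (g _), hw, hx, Pi.single_apply] at this
  simpa [CharTwo.add_eq_zero] using this.symm

theorem comp_inl_mem_balancedSubmodule_of_mem_ker_incidence
    (hw : ∀ i, g (w i) + g (w' i) = Pi.single i 1) (hx : ∀ i, g (x i) + g (x' i) = Pi.single i 1)
    {c : ι ⊕ ι → ZMod 2} (hc : c ∈ LinearMap.ker Θ) :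
    c ∘ Sum.inl ∈ balancedSubmodule fun i => g (w i) + g (x i) := by
  intro j l
  have := linearCombination_incidence (Sum.elim w x) (Sum.elim w' x') c fun k => g k j * g k l
  rw [LinearMap.mem_ker.1 hc, map_zero, Fintype.sum_sum_type] at this
  simp only [Sum.elim_inl, Sum.elim_inr, mul_add_mul_of_add_eq (hw _),
    mul_add_mul_of_add_eq (hx _), ← apply_inl_eq_apply_inr_of_mem_ker_incidence hw hx hc] at this
  have cancel : ∀ a E F P P' Q Q' : ZMod 2, a * (E * P + Q * F + E * F) +
      a * (E * P' + Q' * F + E * F) = E * (a * (P + P')) + F * (a * (Q + Q')) := by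
    intro a E F P P' Q Q'
    linear_combination (a * E * F) * CharTwo.two_eq_zero (R := ZMod 2)
  simp only [← Finset.sum_add_distrib, cancel] at this
  simp only [Finset.sum_add_distrib, Pi.single_apply, ite_mul, one_mul, zero_mul,
    Finset.sum_ite_eq, Finset.mem_univ, if_true] at this
  exact CharTwo.add_eq_zero.1 this.symm

theorem finrank_ker_incidence_le
    (hw : ∀ i, g (w i) + g (w' i) = Pi.single i 1) (hx : ∀ i, g (x i) + g (x' i) = Pi.single i 1) :
    finrank (ZMod 2) (LinearMap.ker Θ) ≤
      finrank (ZMod 2) (balancedSubmodule fun i => g (w i) + g (x i)) := by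
  let π := LinearMap.codRestrict (balancedSubmodule fun i => g (w i) + g (x i))
    (LinearMap.funLeft (ZMod 2) (ZMod 2) Sum.inl ∘ₗ (LinearMap.ker Θ).subtype)
    fun c => comp_inl_mem_balancedSubmodule_of_mem_ker_incidence hw hx c.2
  refine LinearMap.finrank_le_finrank_of_injective (f := π) <|
    (injective_iff_map_eq_zero π).2 fun c hc => Subtype.ext <| funext fun t => ?_
  have hinl : ∀ j, c.1 (Sum.inl j) = 0 := fun j => congr_fun (congrArg Subtype.val hc) j
  rcases t with j | j
  · exact hinl j
  · exact apply_inl_eq_apply_inr_of_mem_ker_incidence hw hx c.2 j ▸ hinl j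

variable (g)

theorem three_mul_card_add_two_le_of_forall_exists [Nonempty κ]
    (hq : ∀ i, ∃ w w' x x', g w + g w' = Pi.single i 1 ∧ g x + g x' = Pi.single i 1 ∧
      g x ≠ g w ∧ g x ≠ g w') :
    3 * Fintype.card ι + 2 ≤ 2 * Fintype.card κ := by
  choose w w' x x' hw hx hxw hxw' using hq
  have hoff : ∀ j, ∃ k ≠ j, g (w j) k + g (x j) k = 1 := by
    intro j
    by_contra! H
    have hwx : g (w j) + g (x j) = Pi.single j 1 :=
      add_eq_single_of_forall_ne_eq (hxw j).symm fun k hk => by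
        have : ∀ y : ZMod 2, y ≠ 1 → y = 0 := by decide
        exact CharTwo.add_eq_zero.1 (this _ (H k hk))
    exact hxw' j (add_left_cancel (hwx.trans (hw j).symm))
  have hrn := (incidence (ZMod 2) (Sum.elim w x) (Sum.elim w' x')).finrank_range_add_finrank_ker
  have hrange := finrank_range_incidence_lt (Sum.elim w x) (Sum.elim w' x')
  have hker := finrank_ker_incidence_le hw hx
  have hbal := two_mul_finrank_balancedSubmodule_le (fun i => g (w i) + g (x i)) hoff
  simp only [finrank_pi, Fintype.card_sum] at hrn
  omega

-- Edges of the cube `g(κ)` in one direction form a matching (`g` is injective), so an edge in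
-- direction `i` avoiding the endpoint `c` of another one is disjoint from it.
theorem three_mul_card_add_two_le_of_injective [Nonempty κ] (hg : Function.Injective g)
    (hex : ∀ i, ∃ a, g a i = 1)
    (havoid : ∀ i a, g a i = 1 → ∃ b b', b ≠ a ∧ b' ≠ a ∧ g b + g b' = Pi.single i 1) :
    3 * Fintype.card ι + 2 ≤ 2 * Fintype.card κ := by
  refine three_mul_card_add_two_le_of_forall_exists g fun i => ?_
  obtain ⟨a, ha⟩ := hex i
  obtain ⟨c, d, hc, hcd⟩ : ∃ c d, g c i = 1 ∧ g c + g d = Pi.single i 1 := by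
    obtain ⟨b, b', -, -, hbb'⟩ := havoid i a ha
    have : g b i + g b' i = 1 := by simpa using congr_fun hbb' i
    rcases (by decide : ∀ y z : ZMod 2, y + z = 1 → y = 1 ∨ z = 1) _ _ this with h | h
    · exact ⟨b, b', h, hbb'⟩
    · exact ⟨b', b, h, add_comm (g b) _ ▸ hbb'⟩
  obtain ⟨y, y', hyc, hy'c, hyy'⟩ := havoid i c hc
  refine ⟨c, d, y, y', hcd, hyy', hg.ne hyc, fun hyd => hy'c (hg ?_)⟩
  rw [← hyd] at hcd
  exact add_left_cancel (hyy'.trans (hcd.symm.trans (add_comm _ _)))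

end Hypercube

namespace bipartiteWith

variable {V : Type*} {G : SimpleGraph V} {U W : Set V}

theorem symm (hG : bipartiteWith G U W) : bipartiteWith G W U :=
  ⟨Set.union_comm U W ▸ hG.1, hG.2.1.symm, fun _ _ h => (hG.2.2 h).symm⟩

theorem mem_or_mem (hG : bipartiteWith G U W) (v : V) : v ∈ U ∨ v ∈ W :=
  (hG.1.symm ▸ Set.mem_univ v : v ∈ U ∪ W)

theorem notMem_right (hG : bipartiteWith G U W) {u : V} (hu : u ∈ U) : u ∉ W :=
  Set.disjoint_left.1 hG.2.1 hu

theorem mem_right_of_adj (hG : bipartiteWith G U W) {u v : V} (hu : u ∈ U) (huv : G.Adj u v) :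
    v ∈ W :=
  (hG.2.2 huv).elim And.right fun h => absurd h.1 (hG.notMem_right hu)

theorem not_adj (hG : bipartiteWith G U W) {u u' : V} (hu : u ∈ U) (hu' : u' ∈ U) :
    ¬ G.Adj u u' :=
  fun h => hG.notMem_right hu' (hG.mem_right_of_adj hu h)

theorem eq_of_isDomSet_of_subset_neighborSet (hG : bipartiteWith G U W) {S : Set V} {v : V}
    (hS : isDomSet G S) (hv : v ∈ U) (hSv : S ⊆ G.neighborSet v) : S = W := by
  have hSW : S ⊆ W := fun y hy => hG.mem_right_of_adj hv (hSv hy)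
  refine hSW.antisymm fun w hw => ?_
  by_contra hwS
  obtain ⟨u, huS, hwu⟩ := hS w hwS
  exact hG.symm.not_adj hw (hSW huS) hwu

end bipartiteWith

section LocatingDominating

variable {V : Type*} (G : SimpleGraph V)

theorem ldNum_le {S : Set V} (hS : isLDSet G S) : ldNum G ≤ S.ncard :=
  Nat.sInf_le ⟨S, hS, rfl⟩

theorem exists_isLDSet_ncard_eq_ldNum : ∃ S, isLDSet G S ∧ S.ncard = ldNum G :=
  Nat.sInf_mem (s := {n | ∃ S, isLDSet G S ∧ S.ncard = n})
    ⟨_, Set.univ, ⟨fun v hv => absurd (Set.mem_univ v) hv,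
      fun u hu => absurd (Set.mem_univ u) hu⟩, rfl⟩

variable {G}

theorem compl_neighborSet_inter_s17 {S : Set V} {v : V} (hv : v ∉ S) :
    Gᶜ.neighborSet v ∩ S = S \ G.neighborSet v := by
  ext y
  simp only [Set.mem_inter_iff, mem_neighborSet, compl_adj, Set.mem_sdiff]
  exact ⟨fun h => ⟨h.2, h.1.2⟩, fun h => ⟨⟨fun hvy => hv (hvy ▸ h.1), h.2⟩, h.1⟩⟩

theorem isLDSet_compl_iff {S : Set V} :
    isLDSet Gᶜ S ↔ (∀ v ∉ S, ¬ S ⊆ G.neighborSet v) ∧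
      ∀ u ∉ S, ∀ v ∉ S, u ≠ v → G.neighborSet u ∩ S ≠ G.neighborSet v ∩ S := by
  refine and_congr (forall₂_congr fun v hv => ?_) (forall₂_congr fun u hu => forall₂_congr
    fun v hv => imp_congr_right fun _ => not_congr ?_)
  · simp only [Set.not_subset, mem_neighborSet, compl_adj]
    exact ⟨fun ⟨u, huS, _, hvu⟩ => ⟨u, huS, hvu⟩,
      fun ⟨u, huS, hvu⟩ => ⟨u, huS, fun h => hv (h ▸ huS), hvu⟩⟩
  · rw [compl_neighborSet_inter_s17 hu, compl_neighborSet_inter_s17 hv, sdiff_eq_sdiff_iff_inf_eq_inf,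
      Set.inter_comm _ S, Set.inter_comm _ S]
    rfl

theorem bipartiteWith.exists_twins_of_not_isLDSet_compl {X Y : Set V} (hG : bipartiteWith G X Y)
    {x₀ y₁ : V} (hy₁ : y₁ ∈ Y) (hadj : G.Adj y₁ x₀) (hX : (X \ {x₀}).Nonempty)
    (hT : ¬ isLDSet Gᶜ (insert y₁ (X \ {x₀}))) :
    ∃ y ∈ Y, ∃ y' ∈ Y, y ≠ y₁ ∧ y' ≠ y₁ ∧ y ≠ y' ∧
      ∀ x ∈ X, x ≠ x₀ → (G.Adj y x ↔ G.Adj y' x) := by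
  set T := insert y₁ (X \ {x₀})
  have hy₁T : y₁ ∈ T := Set.mem_insert _ _
  have hout : ∀ v ∉ T, v = x₀ ∨ (v ∈ Y ∧ v ≠ y₁) := by
    intro v hv
    simp only [T, Set.mem_insert_iff, Set.mem_sdiff, Set.mem_singleton_iff, not_or,
      not_and, not_not] at hv
    exact (hG.mem_or_mem v).imp hv.2 fun h => ⟨h, hv.1⟩
  have hx₀ : x₀ ∈ X := hG.symm.mem_right_of_adj hy₁ hadj
  have eq_x₀_iff : ∀ v ∉ T, v = x₀ ↔ y₁ ∈ G.neighborSet v ∩ T := by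
    refine fun v hv => ⟨fun h => ⟨h ▸ hadj.symm, hy₁T⟩, fun h => ?_⟩
    exact (hout v hv).resolve_right fun hvY => hG.symm.not_adj hvY.1 hy₁ h.1
  rw [isLDSet_compl_iff, not_and_or] at hT
  push Not at hT
  rcases hT with ⟨v, hv, hTv⟩ | ⟨u, hu, v, hv, huv, heq⟩
  · obtain ⟨x, hx, hxx₀⟩ := hX
    rcases hout v hv with rfl | ⟨hvY, -⟩
    · exact (hG.not_adj hx₀ hx (hTv (Set.mem_insert_of_mem _ ⟨hx, hxx₀⟩))).elim
    · exact (hG.symm.not_adj hvY hy₁ (hTv hy₁T)).elim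
  · have hiff : u = x₀ ↔ v = x₀ := by rw [eq_x₀_iff u hu, eq_x₀_iff v hv, heq]
    have hux₀ : u ≠ x₀ := fun h => huv (h.trans (hiff.1 h).symm)
    have hvx₀ : v ≠ x₀ := fun h => hux₀ (hiff.2 h)
    obtain ⟨huY, huy₁⟩ := (hout u hu).resolve_left hux₀
    obtain ⟨hvY, hvy₁⟩ := (hout v hv).resolve_left hvx₀
    refine ⟨u, huY, v, hvY, huy₁, hvy₁, huv, fun x hx hxx₀ => ?_⟩
    have hxT : x ∈ T := Set.mem_insert_of_mem _ ⟨hx, hxx₀⟩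
    simpa [hxT] using Set.ext_iff.1 heq x

theorem bipartiteWith.three_mul_ncard_add_two_le [Finite V] {X Y : Set V}
    (hG : bipartiteWith G X Y) (hX : isLDSet G X) {y₀ : V} (hy₀ : y₀ ∈ Y)
    (hXy₀ : X ⊆ G.neighborSet y₀) (hX2 : 2 ≤ X.ncard) (hmin : X.ncard < ldNum Gᶜ) :
    3 * X.ncard + 2 ≤ 2 * Y.ncard := by
  classical
  have := Fintype.ofFinite V
  have : Nonempty Y := ⟨⟨y₀, hy₀⟩⟩
  let g : Y → X → ZMod 2 := fun y x => if G.Adj y x then 1 else 0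
  have hg_one : ∀ y x, g y x = 1 ↔ G.Adj y x := fun y x => by
    by_cases h : G.Adj y x <;> simp [g, h]
  have hg : Function.Injective g := by
    intro y y' hyy'
    by_contra hne
    refine hX.2 y (hG.symm.notMem_right y.2) y' (hG.symm.notMem_right y'.2)
      (Subtype.coe_ne_coe.2 hne) (Set.ext fun x => ?_)
    simp only [Set.mem_inter_iff, mem_neighborSet]
    exact and_congr_left fun hx => by rw [← hg_one y ⟨x, hx⟩, ← hg_one y' ⟨x, hx⟩, hyy']
  rw [← Nat.card_coe_set_eq X, ← Nat.card_coe_set_eq Y, Nat.card_eq_fintype_card,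
    Nat.card_eq_fintype_card]
  refine three_mul_card_add_two_le_of_injective g hg
    (fun i => ⟨⟨y₀, hy₀⟩, (hg_one _ _).2 (hXy₀ i.2)⟩) fun i a hai => ?_
  have hT : ¬ isLDSet Gᶜ (insert a.1 (X \ {i.1})) := fun hT => by
    have := ldNum_le Gᶜ hT
    rw [Set.ncard_insert_of_notMem (fun h => hG.symm.notMem_right a.2 h.1),
      Set.ncard_sdiff_singleton_of_mem i.2] at this
    omega
  have hXi : (X \ {i.1}).Nonempty := Set.nonempty_of_ncard_ne_zero <| by
    rw [Set.ncard_sdiff_singleton_of_mem i.2]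
    omega
  obtain ⟨y, hy, y', hy', hya, hy'a, hyy', htwin⟩ :=
    hG.exists_twins_of_not_isLDSet_compl a.2 ((hg_one a i).1 hai) hXi hT
  refine ⟨⟨y, hy⟩, ⟨y', hy'⟩, Subtype.coe_ne_coe.1 hya, Subtype.coe_ne_coe.1 hy'a,
    add_eq_single_of_forall_ne_eq (hg.ne (Subtype.coe_ne_coe.1 hyy')) fun k hk => ?_⟩
  simp only [g, htwin k k.2 (Subtype.coe_ne_coe.2 hk)]

end LocatingDominating

theorem stmt17 :
    ¬ ∃ (V : Type) (_ : Fintype V) (G : SimpleGraph V) (U W : Set V) (r s : ℕ),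
      G.Connected ∧ bipartiteWith G U W ∧ U.ncard = r ∧ W.ncard = s ∧
      r ≤ s ∧ 4 ≤ r + s ∧ ldNum Gᶜ = ldNum G + 1 ∧
      3 * r ≤ 2 * s ∧ 2 * s < 3 * r + 2 := by
  rintro ⟨V, _, G, U, W, r, s, -, hG, rfl, rfl, hrs, h4, hld, h3r, h2s⟩
  obtain ⟨S, hS, hSn⟩ := exists_isLDSet_ncard_eq_ldNum G
  obtain ⟨v, -, hSv⟩ : ∃ v ∉ S, S ⊆ G.neighborSet v := by
    by_contra! h
    have := ldNum_le Gᶜ (isLDSet_compl_iff.2 ⟨h, hS.2⟩)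
    omega
  rcases hG.mem_or_mem v with hv | hv
  · obtain rfl := hG.eq_of_isDomSet_of_subset_neighborSet hS.1 hv hSv
    have := hG.symm.three_mul_ncard_add_two_le hS hv hSv (by omega) (by omega)
    omega
  · obtain rfl := hG.symm.eq_of_isDomSet_of_subset_neighborSet hS.1 hv hSv
    have := hG.three_mul_ncard_add_two_le hS hv hSv (by omega) (by omega)
    omega
end

section
/- For every pair of natural numbers (r,s) with 3 ≤ r and 3r/2 + 1 ≤ s ≤ 2^r − 1 (i.e., 3r + 2 ≤ 2s and s ≤ 2^r − 1), there exists a connected bipartite graph G with stable sets U and W, |U| = r and |W| = s, such that λ(Ḡ) = λ(G) + 1. -/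
open SimpleGraph

/-! Take `U = Fin r` and for `W` a family of `s` nonempty subsets of `U` containing `U`, every
co-singleton `U \ {a}` and, through every `a`, some co-pair `U \ {a, b}`; each `w ∈ W` is joined
to its elements. Such a family exists when `r + 1 + ⌈r/2⌉ ≤ s ≤ 2^r - 1`.

In `G` as in `Ḡ`, two vertices `w, w'` of `W` outside an LD-set `S` need different traces
`w ∩ S ≠ w' ∩ S`. The `|U \ S| + 1` sets `U` and `U \ {a}`, `a ∉ S`, all have trace `U ∩ S`, so all
but one lie in `S` and `|S| ≥ r`; `U` itself is an LD-set of `G`. In `Ḡ` a co-pair through some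
`a ∉ S` forces one more vertex of `W` into `S` (when `U ⊆ S`, domination of the vertex `U` does),
while `U` together with the vertex `U` is an LD-set of `Ḡ`. -/

open Set

theorem Set.ncard_le_ncard_add_ncard_of_injOn_sdiff {α β : Type*} {X A : Set α} {S : Set β}
    {f : α → β} (hf : InjOn f (X \ A)) (hfS : MapsTo f X S) (hX : X.Finite := by toFinite_tac)
    (hA : A.Finite := by toFinite_tac) (hS : S.Finite := by toFinite_tac) :
    X.ncard ≤ A.ncard + S.ncard := by
  rw [← ncard_inter_add_ncard_sdiff_eq_ncard X A hX, ← hf.ncard_image]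
  gcongr
  · exact inter_subset_right
  · exact (image_mono sdiff_subset).trans (mapsTo_iff_image_subset.1 hfS)

theorem Set.ncard_eq_ncard_preimage_inl_add_ncard_preimage_inr {α β : Type*} [Finite α]
    [Finite β] (s : Set (α ⊕ β)) :
    s.ncard = (Sum.inl ⁻¹' s).ncard + (Sum.inr ⁻¹' s).ncard := by
  conv_lhs => rw [← image_preimage_inl_union_image_preimage_inr s]
  rw [ncard_union_eq (disjoint_image_inl_image_inr), ncard_image_of_injective _ Sum.inl_injective,
    ncard_image_of_injective _ Sum.inr_injective]

theorem Set.ncard_setOf_nonempty (α : Type*) [Fintype α] :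
    {s : Set α | s.Nonempty}.ncard = 2 ^ Fintype.card α - 1 := by
  have h := ncard_add_ncard_compl ({∅} : Set (Set α))
  rw [Nat.card_eq_fintype_card, Fintype.card_set, ncard_singleton] at h
  have hcompl : {s : Set α | s.Nonempty} = {∅}ᶜ := by ext; simp [nonempty_iff_ne_empty]
  rw [hcompl]
  omega

namespace LocatingDomination

variable {α : Type*}

section CoSingletons

def coSingletons (s : Set α) : Set (Set α) := insert univ ((fun a ↦ {a}ᶜ) '' s)

lemma ncard_coSingletons [Finite α] (s : Set α) : (coSingletons s).ncard = s.ncard + 1 := by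
  rw [coSingletons, ncard_insert_of_notMem (by simp), ncard_image_of_injective _
    fun _ _ h ↦ singleton_injective (compl_injective h)]

lemma coSingletons_subset {s : Set α} {𝒲 : Set (Set α)} (huniv : univ ∈ 𝒲)
    (hsing : ∀ a, {a}ᶜ ∈ 𝒲) : coSingletons s ⊆ 𝒲 :=
  insert_subset huniv (image_subset_iff.2 fun a _ ↦ hsing a)

lemma mapsTo_inter_coSingletons_compl (C : Set α) : MapsTo (· ∩ C) (coSingletons Cᶜ) {C} := by
  simp [MapsTo, coSingletons]

section

variable [Finite α] {𝒲 A : Set (Set α)} {C : Set α}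

lemma ncard_compl_le_of_injOn (hC : InjOn (· ∩ C) (𝒲 \ A)) (huniv : univ ∈ 𝒲)
    (hsing : ∀ a, {a}ᶜ ∈ 𝒲) : Cᶜ.ncard ≤ A.ncard := by
  have := ncard_le_ncard_add_ncard_of_injOn_sdiff
    (hC.mono (sdiff_subset_sdiff_left (coSingletons_subset huniv hsing)))
    (mapsTo_inter_coSingletons_compl C)
  rw [ncard_coSingletons, ncard_singleton] at this
  omega

lemma ncard_compl_lt_of_injOn (hC : InjOn (· ∩ C) (𝒲 \ A)) (huniv : univ ∈ 𝒲)
    (hsing : ∀ a, {a}ᶜ ∈ 𝒲) (hpair : ∀ a, ∃ b ≠ a, {a, b}ᶜ ∈ 𝒲) (hCne : Cᶜ.Nonempty) :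
    Cᶜ.ncard < A.ncard := by
  -- Besides the sets of `coSingletons Cᶜ`, all with trace `C`, the co-pair `{a, b}ᶜ` has trace `C`
  -- if `b ∉ C`; otherwise it shares its trace with `{b}ᶜ`. Either way one set too many is left
  -- for the available traces.
  obtain ⟨a, ha⟩ := hCne
  obtain ⟨b, hba, hab⟩ := hpair a
  have hX𝒲 := coSingletons_subset (s := Cᶜ) huniv hsing
  have hXC := mapsTo_inter_coSingletons_compl C
  have hne : ∀ x, ({x} : Set α) ≠ {a, b} := fun x h ↦ by
    simpa [ncard_pair hba.symm] using congr_arg ncard h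
  have habX : {a, b}ᶜ ∉ coSingletons Cᶜ := by
    simpa [coSingletons] using ⟨(insert_nonempty a {b}).ne_empty, fun x _ ↦ hne x⟩
  by_cases hb : b ∈ C
  · have hbX : {b}ᶜ ∉ insert {a, b}ᶜ (coSingletons Cᶜ) := by
      simpa [coSingletons] using ⟨hne b, hb⟩
    have hm : {a, b}ᶜ ∩ C = {b}ᶜ ∩ C := by
      ext x
      grind
    have hXC' := (hXC.insert {a, b}ᶜ).insert {b}ᶜ
    rw [hm, insert_idem] at hXC'
    have := ncard_le_ncard_add_ncard_of_injOn_sdiff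
      (hC.mono (sdiff_subset_sdiff_left (insert_subset (hsing b) (insert_subset hab hX𝒲)))) hXC'
    rw [ncard_insert_of_notMem hbX, ncard_insert_of_notMem habX, ncard_coSingletons] at this
    have := ncard_insert_le ({b}ᶜ ∩ C) {C}
    rw [ncard_singleton] at this
    omega
  · have hm : {a, b}ᶜ ∩ C = C := by
      ext x
      grind
    have hXC' := hXC.insert {a, b}ᶜ
    rw [hm, pair_eq_singleton] at hXC'
    have := ncard_le_ncard_add_ncard_of_injOn_sdiff
      (hC.mono (sdiff_subset_sdiff_left (insert_subset hab hX𝒲))) hXC'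
    rw [ncard_insert_of_notMem habX, ncard_coSingletons, ncard_singleton] at this
    omega

end

end CoSingletons

section IncidenceGraph

def incidenceGraph (𝒲 : Set (Set α)) : SimpleGraph (α ⊕ 𝒲) where
  Adj
    | .inl a, .inr w => a ∈ w.1
    | .inr w, .inl a => a ∈ w.1
    | _, _ => False
  symm := ⟨by rintro (a | w) (b | w') h <;> exact h⟩
  loopless := ⟨by rintro (a | w) h <;> exact h⟩

variable {𝒲 : Set (Set α)} {T : Set (α ⊕ 𝒲)}

@[simp] lemma incidenceGraph_adj_inl_inr {a : α} {w : 𝒲} :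
    (incidenceGraph 𝒲).Adj (.inl a) (.inr w) ↔ a ∈ w.1 := Iff.rfl

@[simp] lemma incidenceGraph_adj_inr_inl {a : α} {w : 𝒲} :
    (incidenceGraph 𝒲).Adj (.inr w) (.inl a) ↔ a ∈ w.1 := Iff.rfl

@[simp] lemma not_incidenceGraph_adj_inr_inr {w w' : 𝒲} :
    ¬ (incidenceGraph 𝒲).Adj (.inr w) (.inr w') := id

def rightPart (T : Set (α ⊕ 𝒲)) : Set (Set α) := Subtype.val '' (Sum.inr ⁻¹' T)

lemma inr_mem_iff_mem_rightPart {w : 𝒲} : Sum.inr w ∈ T ↔ w.1 ∈ rightPart T := by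
  simp [rightPart]

lemma injOn_inter_of_isLDSet_of_neighborSet {H : SimpleGraph (α ⊕ 𝒲)} (hT : isLDSet H T)
    (hN : ∀ w w' : 𝒲, Sum.inr w ∉ T → Sum.inr w' ∉ T → w.1 ∩ Sum.inl ⁻¹' T = w'.1 ∩ Sum.inl ⁻¹' T →
      H.neighborSet (.inr w) ∩ T = H.neighborSet (.inr w') ∩ T) :
    InjOn (· ∩ Sum.inl ⁻¹' T) (𝒲 \ rightPart T) := by
  rintro w ⟨hw, hwT⟩ w' ⟨hw', hw'T⟩ heq
  rw [← inr_mem_iff_mem_rightPart (w := ⟨w, hw⟩)] at hwT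
  rw [← inr_mem_iff_mem_rightPart (w := ⟨w', hw'⟩)] at hw'T
  by_contra hne
  exact hT.2 _ hwT _ hw'T (by simpa using hne) (hN _ _ hwT hw'T heq)

lemma injOn_inter_of_isLDSet (hT : isLDSet (incidenceGraph 𝒲) T) :
    InjOn (· ∩ Sum.inl ⁻¹' T) (𝒲 \ rightPart T) := by
  refine injOn_inter_of_isLDSet_of_neighborSet hT fun w w' _ _ heq ↦ ?_
  ext (a | v)
  · simpa using congr(a ∈ $heq)
  · simp

lemma injOn_inter_of_isLDSet_compl (hT : isLDSet (incidenceGraph 𝒲)ᶜ T) :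
    InjOn (· ∩ Sum.inl ⁻¹' T) (𝒲 \ rightPart T) := by
  refine injOn_inter_of_isLDSet_of_neighborSet hT fun w w' hw hw' heq ↦ ?_
  ext (a | v)
  · have := congr(a ∈ $heq)
    simp only [mem_inter_iff, mem_preimage, eq_iff_iff, and_congr_left_iff, mem_neighborSet,
      compl_adj, ne_eq, reduceCtorEq, not_false_eq_true, incidenceGraph_adj_inr_inl, true_and]
      at this ⊢
    exact fun ha ↦ not_congr (this ha)
  · simp only [mem_inter_iff, mem_neighborSet, compl_adj, ne_eq, Sum.inr.injEq,
      not_incidenceGraph_adj_inr_inr, not_false_eq_true, and_true, and_congr_left_iff]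
    exact fun hv ↦ ⟨fun _ h ↦ hw' (h ▸ hv), fun _ h ↦ hw (h ▸ hv)⟩

lemma isLDSet_range_inl (hne : ∀ w ∈ 𝒲, w.Nonempty) :
    isLDSet (incidenceGraph 𝒲) (range Sum.inl) := by
  refine ⟨?_, ?_⟩
  · rintro (a | ⟨w, hw⟩) hv
    · exact absurd (mem_range_self a) hv
    · obtain ⟨a, ha⟩ := hne w hw
      exact ⟨.inl a, mem_range_self a, ha⟩
  · rintro (a | w) hu (b | w') hv hne heq
    · exact hu (mem_range_self a)
    · exact hu (mem_range_self a)
    · exact hv (mem_range_self b)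
    refine hne (congrArg _ (Subtype.ext (Set.ext fun a ↦ ?_)))
    simpa using congr(Sum.inl a ∈ $heq)

lemma isLDSet_compl_insert_range_inl (huniv : univ ∈ 𝒲) :
    isLDSet (incidenceGraph 𝒲)ᶜ (insert (.inr ⟨univ, huniv⟩) (range Sum.inl)) := by
  refine ⟨?_, ?_⟩
  · rintro (a | w) hv
    · exact absurd (mem_insert_of_mem _ (mem_range_self a)) hv
    · refine ⟨.inr ⟨univ, huniv⟩, mem_insert _ _, ?_⟩
      simpa [eq_comm] using hv
  · rintro (a | w) hu (b | w') hv hne heq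
    · exact hu (mem_insert_of_mem _ (mem_range_self a))
    · exact hu (mem_insert_of_mem _ (mem_range_self a))
    · exact hv (mem_insert_of_mem _ (mem_range_self b))
    refine hne (congrArg _ (Subtype.ext (Set.ext fun a ↦ ?_)))
    simpa using not_congr congr(Sum.inl a ∈ $heq)

lemma ncard_eq_ncard_preimage_inl_add_ncard_rightPart [Finite α] (T : Set (α ⊕ 𝒲)) :
    T.ncard = (Sum.inl ⁻¹' T).ncard + (rightPart T).ncard := by
  rw [rightPart, ncard_image_of_injective _ Subtype.val_injective,
    ncard_eq_ncard_preimage_inl_add_ncard_preimage_inr]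

lemma ncard_le_of_isLDSet [Finite α] (huniv : univ ∈ 𝒲) (hsing : ∀ a, {a}ᶜ ∈ 𝒲)
    (hT : isLDSet (incidenceGraph 𝒲) T) : Nat.card α ≤ T.ncard := by
  have := ncard_compl_le_of_injOn (injOn_inter_of_isLDSet hT) huniv hsing
  have := ncard_add_ncard_compl (Sum.inl ⁻¹' T)
  rw [ncard_eq_ncard_preimage_inl_add_ncard_rightPart]
  omega

lemma rightPart_nonempty_of_isDomSet_compl (huniv : univ ∈ 𝒲)
    (hT : isDomSet (incidenceGraph 𝒲)ᶜ T) : (rightPart T).Nonempty := by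
  by_cases h : Sum.inr ⟨univ, huniv⟩ ∈ T
  · exact ⟨univ, _, h, rfl⟩
  obtain ⟨a | w, hu, hadj⟩ := hT _ h
  · simp at hadj
  · exact ⟨w, w, hu, rfl⟩

lemma ncard_lt_of_isLDSet_compl [Finite α] (huniv : univ ∈ 𝒲) (hsing : ∀ a, {a}ᶜ ∈ 𝒲)
    (hpair : ∀ a, ∃ b ≠ a, {a, b}ᶜ ∈ 𝒲) (hT : isLDSet (incidenceGraph 𝒲)ᶜ T) :
    Nat.card α < T.ncard := by
  have hA : (Sum.inl ⁻¹' T)ᶜ.ncard < (rightPart T).ncard := by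
    rcases (Sum.inl ⁻¹' T)ᶜ.eq_empty_or_nonempty with hC | hC
    · rw [hC, ncard_empty]
      exact (rightPart_nonempty_of_isDomSet_compl huniv hT.1).ncard_pos
    · exact ncard_compl_lt_of_injOn (injOn_inter_of_isLDSet_compl hT) huniv hsing hpair hC
  have := ncard_add_ncard_compl (Sum.inl ⁻¹' T)
  rw [ncard_eq_ncard_preimage_inl_add_ncard_rightPart]
  omega

lemma ldNum_incidenceGraph [Finite α] (hne : ∀ w ∈ 𝒲, w.Nonempty) (huniv : univ ∈ 𝒲)
    (hsing : ∀ a, {a}ᶜ ∈ 𝒲) : ldNum (incidenceGraph 𝒲) = Nat.card α :=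
  IsLeast.csInf_eq ⟨⟨_, isLDSet_range_inl hne, ncard_range_of_injective Sum.inl_injective⟩,
    by rintro _ ⟨T, hT, rfl⟩; exact ncard_le_of_isLDSet huniv hsing hT⟩

lemma ldNum_compl_incidenceGraph [Finite α] (huniv : univ ∈ 𝒲) (hsing : ∀ a, {a}ᶜ ∈ 𝒲)
    (hpair : ∀ a, ∃ b ≠ a, {a, b}ᶜ ∈ 𝒲) : ldNum (incidenceGraph 𝒲)ᶜ = Nat.card α + 1 := by
  refine IsLeast.csInf_eq ⟨⟨_, isLDSet_compl_insert_range_inl huniv, ?_⟩, ?_⟩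
  · rw [ncard_insert_of_notMem (by simp), ncard_range_of_injective Sum.inl_injective]
  · rintro _ ⟨T, hT, rfl⟩
    exact ncard_lt_of_isLDSet_compl huniv hsing hpair hT

lemma connected_incidenceGraph (hne : ∀ w ∈ 𝒲, w.Nonempty) (huniv : univ ∈ 𝒲) :
    (incidenceGraph 𝒲).Connected := by
  refine (connected_iff_exists_forall_reachable _).2 ⟨.inr ⟨univ, huniv⟩, ?_⟩
  have hreach (a : α) : (incidenceGraph 𝒲).Reachable (.inr ⟨univ, huniv⟩) (.inl a) :=
    Adj.reachable (mem_univ a)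
  rintro (a | ⟨w, hw⟩)
  · exact hreach a
  · obtain ⟨a, ha⟩ := hne w hw
    exact (hreach a).trans (Adj.reachable (show a ∈ w from ha))

lemma bipartiteWith_incidenceGraph :
    bipartiteWith (incidenceGraph 𝒲) (range Sum.inl) (range Sum.inr) := by
  refine ⟨range_inl_union_range_inr, isCompl_range_inl_range_inr.disjoint, ?_⟩
  rintro (a | w) (b | w') h
  · exact h.elim
  · exact .inl ⟨mem_range_self a, mem_range_self w'⟩
  · exact .inr ⟨mem_range_self w, mem_range_self b⟩
  · exact h.elim

end IncidenceGraph

section Family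

lemma nonempty_compl_preimage_val_pair {r : ℕ} (hr : 3 ≤ r) (m : ℕ) :
    (Fin.val ⁻¹' ({m, m + 1} : Set ℕ) : Set (Fin r))ᶜ.Nonempty := by
  rcases Nat.eq_zero_or_pos m with rfl | hm
  · exact ⟨⟨2, by omega⟩, by simp⟩
  · exact ⟨⟨0, by omega⟩, by simp [hm.ne]⟩

lemma exists_pair_eq_preimage_val {r : ℕ} (hr : 2 ≤ r) (a : Fin r) :
    ∃ b ≠ a, ({a, b} : Set (Fin r)) = Fin.val ⁻¹' ({min (2 * ((a : ℕ) / 2)) (r - 2),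
      min (2 * ((a : ℕ) / 2)) (r - 2) + 1} : Set ℕ) := by
  set m := min (2 * ((a : ℕ) / 2)) (r - 2)
  have ha : (a : ℕ) = m ∨ (a : ℕ) = m + 1 := by omega
  refine ⟨⟨if (a : ℕ) = m then m + 1 else m, by split_ifs <;> omega⟩, ?_, ?_⟩
  · simp only [ne_eq, Fin.ext_iff]
    split_ifs <;> omega
  · ext x
    simp only [mem_insert_iff, mem_singleton_iff, mem_preimage, Fin.ext_iff]
    split_ifs <;> omega

lemma exists_family {r s : ℕ} (hr : 3 ≤ r) (h1 : 3 * r + 2 ≤ 2 * s) (h2 : s ≤ 2 ^ r - 1) :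
    ∃ 𝒲 : Set (Set (Fin r)), 𝒲.ncard = s ∧ (∀ w ∈ 𝒲, w.Nonempty) ∧ univ ∈ 𝒲 ∧
      (∀ a, {a}ᶜ ∈ 𝒲) ∧ ∀ a, ∃ b ≠ a, {a, b}ᶜ ∈ 𝒲 := by
  classical
  -- `⌈r/2⌉` co-pairs, of `{2k, 2k+1}` and, for odd `r`, of `{r-2, r-1}`, cover every point.
  let pair (k : ℕ) : Set (Fin r) :=
    (Fin.val ⁻¹' ({min (2 * k) (r - 2), min (2 * k) (r - 2) + 1} : Set ℕ))ᶜ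
  let B : Finset (Set (Fin r)) :=
    insert univ (Finset.univ.image (fun a ↦ {a}ᶜ) ∪ (Finset.range ((r + 1) / 2)).image pair)
  have hBcard : B.card ≤ s := calc
    B.card ≤ (Finset.univ.image (fun a : Fin r ↦ ({a}ᶜ : Set (Fin r)))).card
        + ((Finset.range ((r + 1) / 2)).image pair).card + 1 :=
      (Finset.card_insert_le _ _).trans (by gcongr; exact Finset.card_union_le _ _)
    _ ≤ r + (r + 1) / 2 + 1 := by
      gcongr
      · exact Finset.card_image_le.trans (by simp)
      · exact Finset.card_image_le.trans (by simp)
    _ ≤ s := by omega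
  have hBne : (B : Set (Set (Fin r))) ⊆ {w | w.Nonempty} := by
    have : Nontrivial (Fin r) := Fin.nontrivial_iff_two_le.2 (by omega)
    simp only [B, Finset.coe_insert, Finset.coe_union, Finset.coe_image, Finset.coe_univ,
      Finset.coe_range, insert_subset_iff, union_subset_iff, image_subset_iff]
    exact ⟨univ_nonempty, fun a _ ↦ nonempty_compl_of_nontrivial a,
      fun k _ ↦ nonempty_compl_preimage_val_pair hr _⟩
  obtain ⟨𝒲, hB𝒲, h𝒲, hcard⟩ := exists_subsuperset_card_eq (n := s) hBne
    (by rwa [ncard_coe_finset]) (by rwa [ncard_setOf_nonempty, Fintype.card_fin])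
  refine ⟨𝒲, hcard, h𝒲, hB𝒲 (by simp [B]), fun a ↦ hB𝒲 (by simp [B]), fun a ↦ ?_⟩
  obtain ⟨b, hba, hab⟩ := exists_pair_eq_preimage_val (by omega) a
  refine ⟨b, hba, hB𝒲 (Finset.mem_coe.2 ?_)⟩
  rw [hab]
  exact Finset.mem_insert_of_mem (Finset.mem_union_right _
    (Finset.mem_image_of_mem pair (Finset.mem_range.2 (by omega))))

end Family

end LocatingDomination

open LocatingDomination

theorem stmt18 (r s : ℕ) (hr : 3 ≤ r) (h1 : 3 * r + 2 ≤ 2 * s) (h2 : s ≤ 2 ^ r - 1) :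
    ∃ (V : Type) (_ : Fintype V) (G : SimpleGraph V) (U W : Set V),
      G.Connected ∧ bipartiteWith G U W ∧ U.ncard = r ∧ W.ncard = s ∧
      ldNum Gᶜ = ldNum G + 1 := by
  obtain ⟨𝒲, hcard, hne, huniv, hsing, hpair⟩ := exists_family hr h1 h2
  have : Fintype 𝒲 := Fintype.ofFinite 𝒲
  refine ⟨Fin r ⊕ 𝒲, inferInstance, incidenceGraph 𝒲, range Sum.inl, range Sum.inr,
    connected_incidenceGraph hne huniv, bipartiteWith_incidenceGraph, ?_, ?_, ?_⟩
  · rw [ncard_range_of_injective Sum.inl_injective, Nat.card_fin]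
  · rw [ncard_range_of_injective Sum.inr_injective, Nat.card_coe_set_eq, hcard]
  · rw [ldNum_compl_incidenceGraph huniv hsing hpair, ldNum_incidenceGraph hne huniv hsing]
end
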